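/- arXiv:1212.5909 — 6 statements merged into one kernel-verified Lean document; each statement's English description precedes it below -/
import Mathlib

section
/- For any locally compact separable metric space E and any k ∈ ℕ, the map m ↦ m^{⊗k} (k-fold product measure) from Radon measures on E to Radon measures on E^k is continuous with respect to the vague topologies. -/
/-!
Vague continuity of `m ↦ m^{⊗ι}` means continuity of `m ↦ ∫ f dm^{⊗ι}` for every compactly
supported `f` on `E^ι`. For tensors `f = ⊗ gᵢ` this integral is `∏ ∫ gᵢ dm`, hence continuous, and
so it is for their linear span. Fix cutoffs `χᵢ` equal to `1` on the coordinate projections of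
`supp f` and `eᵢ` equal to `1` on `supp χᵢ`. By Stone–Weierstrass on the compact box
`∏ supp χᵢ`, `f` is uniformly approximated there by some `q` in the span, and then
`|f - q ⊗ χ| ≤ δ · ⊗ e` everywhere. Integrating gives
`|∫ f dm^{⊗ι} - ∫ q ⊗ χ dm^{⊗ι}| ≤ δ ∏ ∫ eᵢ dm`, which is locally bounded in `m` since
`m ↦ ∫ eᵢ dm` is continuous: `m ↦ ∫ f dm^{⊗ι}` is a locally uniform limit of continuous maps.
-/

open MeasureTheory Topology

/-- The vague topology on measures. -/
noncomputable def vagueTopology (E : Type*) [TopologicalSpace E] [MeasurableSpace E] :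
    TopologicalSpace (Measure E) :=
  ⨅ f : CompactlySupportedContinuousMap E ℝ,
    TopologicalSpace.induced (fun μ => ∫ x, f x ∂μ) inferInstance

open Set CompactlySupported

theorem continuous_vagueTopology_iff {X E : Type*} [TopologicalSpace X] [TopologicalSpace E]
    [MeasurableSpace E] {F : X → Measure E} :
    Continuous[_, vagueTopology E] F ↔ ∀ f : C_c(E, ℝ), Continuous fun x => ∫ y, f y ∂F x := by
  rw [vagueTopology, continuous_iInf_rng]
  simp only [continuous_induced_rng, Function.comp_def]

theorem continuous_of_abs_sub_le_mul {X : Type*} [TopologicalSpace X] {F w : X → ℝ}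
    (hw : Continuous w)
    (happrox : ∀ δ > 0, ∃ G : X → ℝ, Continuous G ∧ ∀ x, |F x - G x| ≤ δ * w x) :
    Continuous F := by
  refine continuous_iff_continuousAt.2 fun x₀ =>
    continuousAt_of_locally_uniform_approx_of_continuousAt fun u hu => ?_
  obtain ⟨ε, hε, hεu⟩ := Metric.mem_uniformity_dist.1 hu
  set C := |w x₀| + 1
  have hC : 0 < C := by positivity
  obtain ⟨G, hG, hFG⟩ := happrox (ε / C) (by positivity)
  have hw_lt : ∀ᶠ x in 𝓝 x₀, w x < C :=
    hw.continuousAt.eventually_lt_const ((le_abs_self _).trans_lt (lt_add_one _))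
  refine ⟨_, hw_lt, G, hG.continuousAt, fun x hx => hεu ?_⟩
  calc dist (F x) (G x) = |F x - G x| := Real.dist_eq _ _
    _ ≤ ε / C * w x := hFG x
    _ < ε / C * C := by gcongr; exact hx
    _ = ε := div_mul_cancel₀ ε hC.ne'

namespace CompactlySupportedContinuousMap

section General

variable {X : Type*} [TopologicalSpace X]

theorem exists_one_zero_of_isCompact [T2Space X] [LocallyCompactSpace X] {s t : Set X}
    (hs : IsCompact s) (ht : IsClosed t) (hd : Disjoint s t) :
    ∃ f : C_c(X, ℝ), EqOn f 1 s ∧ EqOn f 0 t ∧ ∀ x, f x ∈ Icc (0 : ℝ) 1 := by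
  obtain ⟨f, hf1, hf0, hfc, hf⟩ := exists_continuous_one_zero_of_isCompact hs ht hd
  exact ⟨⟨f, hfc⟩, hf1, hf0, hf⟩

theorem exists_eqOn_one_of_isCompact [T2Space X] [LocallyCompactSpace X] {K : Set X}
    (hK : IsCompact K) : ∃ f : C_c(X, ℝ), EqOn f 1 K ∧ ∀ x, f x ∈ Icc (0 : ℝ) 1 := by
  obtain ⟨f, hf1, -, hf⟩ := exists_one_zero_of_isCompact hK isClosed_empty (disjoint_empty K)
  exact ⟨f, hf1, hf⟩

theorem abs_integral_sub_le_mul [MeasurableSpace X] [OpensMeasurableSpace X] {μ : Measure X}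
    [IsFiniteMeasureOnCompacts μ] {f g w : C_c(X, ℝ)} {δ : ℝ}
    (h : ∀ x, |f x - g x| ≤ δ * w x) :
    |∫ x, f x ∂μ - ∫ x, g x ∂μ| ≤ δ * ∫ x, w x ∂μ := by
  rw [← integral_sub f.integrable g.integrable, ← integral_const_mul]
  exact norm_integral_le_of_norm_le (w.integrable.const_mul δ)
    (.of_forall fun x => (Real.norm_eq_abs _).trans_le (h x))

/-- Stone–Weierstrass for a non-unital algebra of compactly supported functions: a function of
the algebra that is `1` on `K` acts as the unit there. -/
theorem exists_mem_near_of_isCompact (S : NonUnitalSubalgebra ℝ C_c(X, ℝ))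
    (hS : ∀ x y, x ≠ y → ∃ s ∈ S, s x ≠ s y) {K : Set X} (hK : IsCompact K)
    {u : C_c(X, ℝ)} (hu : u ∈ S) (hu1 : EqOn u 1 K) (f : C(X, ℝ)) {ε : ℝ} (hε : 0 < ε) :
    ∃ s ∈ S, ∀ x ∈ K, |s x - f x| < ε := by
  let A : Subalgebra ℝ C(X, ℝ) :=
    { carrier := {g | ∃ s ∈ S, EqOn g s K}
      mul_mem' := fun ⟨s, hs, hgs⟩ ⟨t, ht, hgt⟩ =>
        ⟨s * t, S.mul_mem hs ht, fun x hx => congr_arg₂ (· * ·) (hgs hx) (hgt hx)⟩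
      add_mem' := fun ⟨s, hs, hgs⟩ ⟨t, ht, hgt⟩ =>
        ⟨s + t, S.add_mem hs ht, fun x hx => congr_arg₂ (· + ·) (hgs hx) (hgt hx)⟩
      algebraMap_mem' := fun r => ⟨r • u, S.smul_mem r hu, fun x hx => by simp [hu1 hx]⟩ }
  have hA : A.SeparatesPoints := fun x y hxy => by
    obtain ⟨s, hs, hsxy⟩ := hS x y hxy
    exact ⟨s, ⟨(s : C(X, ℝ)), ⟨s, hs, fun _ _ => rfl⟩, rfl⟩, hsxy⟩
  obtain ⟨g, ⟨s, hs, hgs⟩, hgf⟩ :=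
    ContinuousMap.exists_mem_subalgebra_near_continuous_of_isCompact_of_separatesPoints hA f hK hε
  exact ⟨s, hs, fun x hx => hgs hx ▸ hgf x hx⟩

end General

section Tensor

variable {ι : Type*} [Fintype ι] {E : ι → Type*} [∀ i, TopologicalSpace (E i)]

def tensor : ((i : ι) → C_c(E i, ℝ)) →ₙ* C_c((i : ι) → E i, ℝ) where
  toFun g :=
    { toFun := fun x => ∏ i, g i (x i)
      continuous_toFun := by fun_prop
      hasCompactSupport' := by
        refine .of_isClosed_subset (isCompact_univ_pi fun i => (g i).hasCompactSupport)
          (isClosed_tsupport _)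
          (closure_minimal ?_ (isClosed_set_pi fun i _ => isClosed_tsupport _))
        intro x hx i _
        exact subset_tsupport _ (Finset.prod_ne_zero_iff.1 hx i (Finset.mem_univ i)) }
  map_mul' g h := by ext x; exact Finset.prod_mul_distrib

@[simp] theorem tensor_apply (g : (i : ι) → C_c(E i, ℝ)) (x : (i : ι) → E i) :
    tensor g x = ∏ i, g i (x i) := rfl

theorem mem_span_range_tensor_of_mem_adjoin {q : C_c((i : ι) → E i, ℝ)}
    (hq : q ∈ NonUnitalAlgebra.adjoin ℝ (range tensor)) :
    q ∈ Submodule.span ℝ (range (tensor (E := E))) := by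
  rwa [← NonUnitalSubalgebra.mem_toSubmodule, NonUnitalAlgebra.adjoin_eq_span,
    ← MulHom.coe_srange, Subsemigroup.closure_eq] at hq

theorem integral_tensor [∀ i, MeasurableSpace (E i)] (μ : (i : ι) → Measure (E i))
    [∀ i, SigmaFinite (μ i)] (g : (i : ι) → C_c(E i, ℝ)) :
    ∫ x, tensor g x ∂Measure.pi μ = ∏ i, ∫ x, g i x ∂μ i :=
  integral_fintype_prod_eq_prod fun i x => g i x

section Integral

variable [∀ i, LocallyCompactSpace (E i)] [∀ i, SecondCountableTopology (E i)]
  [∀ i, MeasurableSpace (E i)] [∀ i, BorelSpace (E i)]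

theorem continuous_integral_pi_of_mem_adjoin {X : Type*} [TopologicalSpace X]
    {μ : (i : ι) → X → Measure (E i)} [∀ i x, IsFiniteMeasureOnCompacts (μ i x)]
    (hμ : ∀ i (g : C_c(E i, ℝ)), Continuous fun x => ∫ y, g y ∂μ i x)
    {q : C_c((i : ι) → E i, ℝ)} (hq : q ∈ NonUnitalAlgebra.adjoin ℝ (range tensor)) :
    Continuous fun x => ∫ y, q y ∂Measure.pi fun i => μ i x := by
  replace hq := mem_span_range_tensor_of_mem_adjoin hq
  induction hq using Submodule.span_induction with
  | mem q hq =>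
    obtain ⟨g, rfl⟩ := hq
    simp_rw [integral_tensor]
    exact continuous_finsetProd _ fun i _ => hμ i (g i)
  | zero => simpa using continuous_const
  | add q r _ _ hq hr =>
    simp_rw [add_apply, integral_add q.integrable r.integrable]
    exact hq.add hr
  | smul c q _ hq =>
    simp_rw [smul_apply, smul_eq_mul, integral_const_mul]
    exact hq.const_mul c

end Integral

section Approximation

variable [∀ i, T2Space (E i)] [∀ i, LocallyCompactSpace (E i)]

theorem exists_tensor_apply_ne {x y : (i : ι) → E i} (hxy : x ≠ y) :
    ∃ g, tensor g x ≠ tensor g y := by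
  have : ∀ j, ∃ h : C_c(E j, ℝ), h (x j) = 1 ∧ (x j ≠ y j → h (y j) = 0) := by
    intro j
    by_cases hj : x j = y j
    · obtain ⟨h, h1, -⟩ := exists_eqOn_one_of_isCompact (isCompact_singleton (x := x j))
      exact ⟨h, h1 rfl, fun hne => absurd hj hne⟩
    · obtain ⟨h, h1, h0, -⟩ := exists_one_zero_of_isCompact isCompact_singleton
        isClosed_singleton (disjoint_singleton.2 hj)
      exact ⟨h, h1 rfl, fun _ => h0 rfl⟩
  choose h hx hy using this
  obtain ⟨i, hi⟩ := Function.ne_iff.1 hxy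
  refine ⟨h, ?_⟩
  rw [tensor_apply, tensor_apply, Finset.prod_eq_one fun j _ => hx j,
    Finset.prod_eq_zero (Finset.mem_univ i) (hy i hi)]
  exact one_ne_zero

theorem exists_mem_adjoin_tensor_near {L : (i : ι) → Set (E i)} (hL : ∀ i, IsCompact (L i))
    (f : C((i : ι) → E i, ℝ)) {ε : ℝ} (hε : 0 < ε) :
    ∃ q ∈ NonUnitalAlgebra.adjoin ℝ (range tensor), ∀ x ∈ univ.pi L, |q x - f x| < ε := by
  choose e he1 _ using fun i => exists_eqOn_one_of_isCompact (hL i)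
  refine exists_mem_near_of_isCompact _ (fun x y hxy => ?_) (isCompact_univ_pi hL)
    (NonUnitalAlgebra.subset_adjoin ℝ (mem_range_self e))
    (fun x hx => Finset.prod_eq_one fun i _ => he1 i (hx i trivial)) f hε
  obtain ⟨g, hg⟩ := exists_tensor_apply_ne hxy
  exact ⟨tensor g, NonUnitalAlgebra.subset_adjoin ℝ (mem_range_self g), hg⟩

theorem exists_mem_adjoin_tensor_abs_sub_le (f : C_c((i : ι) → E i, ℝ)) :
    ∃ e : (i : ι) → C_c(E i, ℝ), ∀ δ > 0, ∃ q ∈ NonUnitalAlgebra.adjoin ℝ (range tensor),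
      ∀ x, |f x - q x| ≤ δ * tensor e x := by
  have hK : ∀ i, IsCompact ((fun x => x i) '' tsupport f) := fun i =>
    f.hasCompactSupport.image (continuous_apply i)
  choose χ hχ1 hχ01 using fun i => exists_eqOn_one_of_isCompact (hK i)
  choose e he1 he01 using fun i => exists_eqOn_one_of_isCompact (χ i).hasCompactSupport
  refine ⟨e, fun δ hδ => ?_⟩
  obtain ⟨q, hq, hqf⟩ := exists_mem_adjoin_tensor_near (fun i => (χ i).hasCompactSupport) f hδ
  refine ⟨q * tensor χ, mul_mem hq (NonUnitalAlgebra.subset_adjoin ℝ (mem_range_self χ)),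
    fun x => ?_⟩
  have hχx : tensor χ x ∈ Icc (0 : ℝ) 1 :=
    ⟨Finset.prod_nonneg fun i _ => (hχ01 i _).1,
      Finset.prod_le_one (fun i _ => (hχ01 i _).1) fun i _ => (hχ01 i _).2⟩
  have hχx_one : f x ≠ 0 → tensor χ x = 1 := fun hfx =>
    Finset.prod_eq_one fun i _ => hχ1 i ⟨x, subset_tsupport f hfx, rfl⟩
  by_cases hx : x ∈ univ.pi fun i => tsupport (χ i)
  · have hqfx : |q x - f x| ≤ δ := (hqf x hx).le
    have he : tensor e x = 1 := Finset.prod_eq_one fun i _ => he1 i (hx i trivial)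
    rw [he, mul_one, mul_apply]
    by_cases hf : f x = 0
    · rw [hf, sub_zero] at hqfx
      rw [hf, zero_sub, abs_neg, abs_mul, abs_of_nonneg hχx.1]
      exact (mul_le_of_le_one_right (abs_nonneg _) hχx.2).trans hqfx
    · rw [hχx_one hf, mul_one, abs_sub_comm]
      exact hqfx
  · obtain ⟨i, -, hi⟩ := not_forall₂.1 hx
    have hχx_zero : tensor χ x = 0 :=
      Finset.prod_eq_zero (Finset.mem_univ i) (image_eq_zero_of_notMem_tsupport hi)
    have hf : f x = 0 := by
      by_contra hf
      exact one_ne_zero ((hχx_one hf).symm.trans hχx_zero)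
    rw [mul_apply, hχx_zero, hf, mul_zero, sub_zero, abs_zero]
    exact mul_nonneg hδ.le (Finset.prod_nonneg fun i _ => (he01 i _).1)

end Approximation

end Tensor

end CompactlySupportedContinuousMap

open CompactlySupportedContinuousMap

section ProductMeasure

variable {ι : Type*} [Fintype ι] {E : ι → Type*} [∀ i, TopologicalSpace (E i)]
  [∀ i, T2Space (E i)] [∀ i, LocallyCompactSpace (E i)] [∀ i, SecondCountableTopology (E i)]
  [∀ i, MeasurableSpace (E i)] [∀ i, BorelSpace (E i)]
  {X : Type*} [TopologicalSpace X] {μ : (i : ι) → X → Measure (E i)}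
  [∀ i x, IsFiniteMeasureOnCompacts (μ i x)]

theorem continuous_integral_pi
    (hμ : ∀ i (g : C_c(E i, ℝ)), Continuous fun x => ∫ y, g y ∂μ i x)
    (f : C_c((i : ι) → E i, ℝ)) :
    Continuous fun x => ∫ y, f y ∂Measure.pi fun i => μ i x := by
  obtain ⟨e, happrox⟩ := exists_mem_adjoin_tensor_abs_sub_le f
  refine continuous_of_abs_sub_le_mul (continuous_integral_pi_of_mem_adjoin hμ
    (NonUnitalAlgebra.subset_adjoin ℝ (mem_range_self e))) fun δ hδ => ?_
  obtain ⟨q, hq, hfq⟩ := happrox δ hδ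
  exact ⟨_, continuous_integral_pi_of_mem_adjoin hμ hq, fun x => abs_integral_sub_le_mul hfq⟩

theorem continuous_vagueTopology_pi (hμ : ∀ i, Continuous[_, vagueTopology (E i)] (μ i)) :
    Continuous[_, vagueTopology ((i : ι) → E i)] fun x => Measure.pi fun i => μ i x :=
  continuous_vagueTopology_iff.2 <|
    continuous_integral_pi fun i => continuous_vagueTopology_iff.1 (hμ i)

end ProductMeasure

/-- For a locally compact separable metric space `E` and `k : ℕ`, the map `m ↦ m^{⊗k}`
from Radon measures on `E` to measures on `E^k` is continuous for the vague topologies. -/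
theorem prod_power_vague_continuous (E : Type*) [MetricSpace E]
    [TopologicalSpace.SeparableSpace E] [LocallyCompactSpace E]
    [MeasurableSpace E] [BorelSpace E] (k : ℕ) :
    @Continuous {m : Measure E // IsFiniteMeasureOnCompacts m ∧ m.InnerRegular}
      (Measure (Fin k → E))
      (TopologicalSpace.induced Subtype.val (vagueTopology E))
      (vagueTopology (Fin k → E))
      (fun m => Measure.pi (fun _ : Fin k => (m : Measure E))) := by
  let _ : TopologicalSpace {m : Measure E // IsFiniteMeasureOnCompacts m ∧ m.InnerRegular} :=
    .induced Subtype.val (vagueTopology E)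
  have (m : {m : Measure E // IsFiniteMeasureOnCompacts m ∧ m.InnerRegular}) :
      IsFiniteMeasureOnCompacts (m : Measure E) := m.2.1
  exact continuous_vagueTopology_pi fun _ => continuous_induced_dom
end

section
/- For k ∈ ℕ, F continuous with compact support on T^k, and g_1,…,g_k continuous on K, the function m ↦ ⟨m^{⊗k}, F ⊗ G_g⟩, where G_g(κ_1,…,κ_k) = ∏_j g_j(κ_j), is continuous on M_λ with respect to the vague topology. -/
/-!
By Stone–Weierstrass, `H(x) = F(x₁, …, x_k) ∏ᵢ gᵢ(κᵢ)` is a uniform limit of finite sums of products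
`∏ᵢ fᵢ(xᵢ, κᵢ)` with `fᵢ ∈ C_c(T × K)`, all supported in one compact set `S`: the union of the
coordinate projections of `tsupport H`. This `S` is a neighbourhood of every coordinate of a point
where `H ≠ 0`, which supplies the cutoff functions without local compactness of `T`.
By Fubini, `∫ ∏ᵢ fᵢ(xᵢ) dm^{⊗k} = ∏ᵢ ∫ fᵢ dm` is vaguely continuous in `m`. As the spatial
marginal of every `m ∈ M_λ` is Lebesgue measure, `m(S)` is bounded by the Lebesgue measure of the
projection of `S`, uniformly in `m`. So the approximation is uniform on `M_λ`, and the uniform limit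
of continuous functions is continuous.
-/

open MeasureTheory Topology

open Set Function

lemma abs_sub_mul_le_of_abs_sub_le {h g w ε : ℝ} (hw : w ∈ Icc 0 1) (hhg : |h - g| ≤ ε)
    (hw_one : ε ≤ |h| → w = 1) : |h - w * g| ≤ ε := by
  by_cases hh : ε ≤ |h|
  · simpa [hw_one hh] using hhg
  calc |h - w * g| = |(1 - w) * h + w * (h - g)| := by ring_nf
    _ ≤ (1 - w) * |h| + w * |h - g| := by
      refine (abs_add_le _ _).trans_eq ?_
      rw [abs_mul, abs_mul, abs_of_nonneg (sub_nonneg.2 hw.2), abs_of_nonneg hw.1]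
    _ ≤ (1 - w) * ε + w * ε := by
      gcongr
      · exact sub_nonneg.2 hw.2
      · exact (not_le.1 hh).le
      · exact hw.1
    _ = ε := by ring

section CoordinateSupport

variable {ι X : Type*} [TopologicalSpace X]

def coordinateSupport (H : (ι → X) → ℝ) : Set X := ⋃ i, eval i '' tsupport H

lemma tsupport_subset_pi_coordinateSupport (H : (ι → X) → ℝ) :
    tsupport H ⊆ univ.pi fun _ => coordinateSupport H :=
  fun x hx i _ => mem_iUnion.2 ⟨i, x, hx, rfl⟩

lemma HasCompactSupport.isCompact_coordinateSupport [Finite ι] {H : (ι → X) → ℝ}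
    (hH : HasCompactSupport H) : IsCompact (coordinateSupport H) :=
  isCompact_iUnion fun i => hH.image (continuous_apply i)

lemma coordinateSupport_mem_nhds {H : (ι → X) → ℝ} (hH : Continuous H) {x : ι → X}
    (hx : H x ≠ 0) (i : ι) : coordinateSupport H ∈ 𝓝 (x i) := by
  classical
  have hupdate : ContinuousAt (update x i) (x i) :=
    (continuous_const.update i continuous_id).continuousAt
  have hpre : update x i ⁻¹' support H ∈ 𝓝 (x i) :=
    hupdate.preimage_mem_nhds (by rw [update_eq_self]; exact hH.isOpen_support.mem_nhds hx)
  exact Filter.mem_of_superset hpre fun y hy =>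
    mem_iUnion.2 ⟨i, update x i y, subset_tsupport H hy, update_self i y x⟩

lemma exists_cutoff_eq_one_of_le_abs [Finite ι] [T35Space X] {H : (ι → X) → ℝ}
    (hH : Continuous H) (hHc : HasCompactSupport H) {ε : ℝ} (hε : 0 < ε) :
    ∃ w : C(X, ℝ), tsupport w ⊆ coordinateSupport H ∧
      (∀ x, ε ≤ |H x| → ∀ i, w (x i) = 1) ∧ ∀ y, w y ∈ Icc 0 1 := by
  set E := {x | ε ≤ |H x|}
  have hE : IsCompact E := hHc.of_isClosed_subset (isClosed_le continuous_const hH.abs)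
    fun x hx => subset_tsupport H fun h0 => by simp_all [E]; linarith
  have hEne : ∀ x ∈ E, H x ≠ 0 := fun x hx h0 => by simp_all [E]; linarith
  have hS := hHc.isCompact_coordinateSupport
  obtain ⟨w, hw_supp, hw_one, hw_mem⟩ := exists_tsupport_one_of_isOpen_isClosed isOpen_interior
    (hS.of_isClosed_subset isClosed_closure (closure_minimal interior_subset hS.isClosed))
    (isCompact_iUnion fun i => hE.image (continuous_apply i)).isClosed
    (iUnion_subset fun i => by
      rintro _ ⟨x, hx, rfl⟩
      exact mem_interior_iff_mem_nhds.2 (coordinateSupport_mem_nhds hH (hEne x hx) i))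
  exact ⟨w, hw_supp.trans interior_subset,
    fun x hx i => hw_one (mem_iUnion.2 ⟨i, x, hx, rfl⟩), hw_mem⟩

end CoordinateSupport

section ProductFunctions

variable (ι X : Type*) [Fintype ι] [TopologicalSpace X]

def prodSubmonoid : Submonoid C(ι → X, ℝ) where
  carrier := {φ | ∃ b : ι → C(X, ℝ), ∀ x, φ x = ∏ i, b i (x i)}
  mul_mem' := by
    rintro _ _ ⟨b, hb⟩ ⟨b', hb'⟩
    exact ⟨b * b', fun x => by simp [hb, hb', Finset.prod_mul_distrib]⟩
  one_mem' := ⟨1, by simp⟩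

variable {ι X}

lemma comp_eval_mem_prodSubmonoid [DecidableEq ι] (b : C(X, ℝ)) (i : ι) :
    b.comp (ContinuousMap.eval i) ∈ prodSubmonoid ι X := by
  refine ⟨Pi.mulSingle i b, fun x => ?_⟩
  rw [Finset.prod_eq_single i (fun j _ hj => by simp [Pi.mulSingle_eq_of_ne hj]) (by simp)]
  simp

lemma separatesPoints_adjoin_prodSubmonoid [T35Space X] :
    (Algebra.adjoin ℝ (prodSubmonoid ι X : Set C(ι → X, ℝ))).SeparatesPoints := by
  classical
  intro x y hxy
  obtain ⟨i, hi⟩ := Function.ne_iff.1 hxy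
  obtain ⟨b, hb, hbxy⟩ := separatesPoints_continuous_of_t35Space hi
  exact ⟨_, ⟨_, Algebra.subset_adjoin (comp_eval_mem_prodSubmonoid ⟨b, hb⟩ i), rfl⟩, hbxy⟩

lemma exists_sum_prod_eq_of_mem_adjoin {G : C(ι → X, ℝ)}
    (hG : G ∈ Algebra.adjoin ℝ (prodSubmonoid ι X : Set C(ι → X, ℝ))) :
    ∃ (n : ℕ) (c : Fin n → ℝ) (b : Fin n → ι → C(X, ℝ)),
      ∀ x, G x = ∑ j, c j * ∏ i, b j i (x i) := by
  rw [← Subalgebra.mem_toSubmodule, Algebra.adjoin_eq_span, Submonoid.closure_eq,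
    Submodule.mem_span_set'] at hG
  obtain ⟨n, c, φ, rfl⟩ := hG
  choose b hb using fun j => (φ j).2
  exact ⟨n, c, b, fun x => by simp [hb]⟩

lemma exists_sum_prod_near_of_isCompact [T35Space X] {H : (ι → X) → ℝ} (hH : Continuous H)
    {S : Set (ι → X)} (hS : IsCompact S) {ε : ℝ} (hε : 0 < ε) :
    ∃ (n : ℕ) (c : Fin n → ℝ) (b : Fin n → ι → C(X, ℝ)),
      ∀ x ∈ S, |H x - ∑ j, c j * ∏ i, b j i (x i)| < ε := by
  obtain ⟨G, hG, hGH⟩ :=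
    ContinuousMap.exists_mem_subalgebra_near_continuous_of_isCompact_of_separatesPoints
      separatesPoints_adjoin_prodSubmonoid ⟨H, hH⟩ hS hε
  obtain ⟨n, c, b, hb⟩ := exists_sum_prod_eq_of_mem_adjoin hG
  refine ⟨n, c, b, fun x hx => ?_⟩
  rw [← hb, abs_sub_comm]
  exact hGH x hx

lemma exists_sum_prod_near [T35Space X] {H : (ι → X) → ℝ}
    (hH : Continuous H) (hHc : HasCompactSupport H) {ε : ℝ} (hε : 0 < ε) :
    ∃ (n : ℕ) (c : Fin n → ℝ) (f : Fin n → ι → C(X, ℝ)),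
      (∀ j i, tsupport (f j i) ⊆ coordinateSupport H) ∧
        ∀ x, |H x - ∑ j, c j * ∏ i, f j i (x i)| ≤ ε := by
  obtain ⟨w, hw_supp, hw_one, hw_mem⟩ := exists_cutoff_eq_one_of_le_abs hH hHc hε
  obtain ⟨n, c, b, hb⟩ := exists_sum_prod_near_of_isCompact hH
    (isCompact_univ_pi fun _ => hHc.isCompact_coordinateSupport) hε
  refine ⟨n, c, fun j i => b j i * w, fun j i => ?_, fun x => ?_⟩
  · exact (tsupport_mul_subset_right).trans hw_supp
  have hsum : ∑ j, c j * ∏ i, (b j i * w) (x i) =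
      (∏ i, w (x i)) * ∑ j, c j * ∏ i, b j i (x i) := by
    simp only [ContinuousMap.mul_apply, Finset.prod_mul_distrib, Finset.mul_sum]
    exact Finset.sum_congr rfl fun j _ => by ring
  rw [hsum]
  by_cases hx : x ∈ univ.pi fun _ => coordinateSupport H
  · refine abs_sub_mul_le_of_abs_sub_le ⟨Finset.prod_nonneg fun i _ => (hw_mem _).1,
      Finset.prod_le_one (fun i _ => (hw_mem _).1) fun i _ => (hw_mem _).2⟩ (hb x hx).le
      fun hHx => by simp [hw_one x hHx]
  obtain ⟨i, -, hi⟩ := by simpa only [mem_pi, not_forall] using hx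
  have hwi : w (x i) = 0 := image_eq_zero_of_notMem_tsupport fun h => hi (hw_supp h)
  have hHx : H x = 0 := image_eq_zero_of_notMem_tsupport fun h =>
    hx (tsupport_subset_pi_coordinateSupport H h)
  rw [Finset.prod_eq_zero (Finset.mem_univ i) hwi, hHx]
  simpa using hε.le

end ProductFunctions

lemma abs_integral_pi_sub_sum_prod_le {ι X : Type*} [Fintype ι] [TopologicalSpace X]
    [SecondCountableTopology X] [MeasurableSpace X] [OpensMeasurableSpace X]
    (μ : Measure X) [SigmaFinite μ] [IsFiniteMeasureOnCompacts μ] {S : Set X} (hS : IsCompact S)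
    {H : (ι → X) → ℝ} (hH : Continuous H) (hHS : tsupport H ⊆ univ.pi fun _ => S)
    {n : ℕ} {c : Fin n → ℝ} {f : Fin n → ι → C(X, ℝ)} (hf : ∀ j i, tsupport (f j i) ⊆ S)
    {ε : ℝ} (hHf : ∀ x, |H x - ∑ j, c j * ∏ i, f j i (x i)| ≤ ε) :
    |∫ x, H x ∂Measure.pi (fun _ => μ) - ∑ j, c j * ∏ i, ∫ y, f j i y ∂μ| ≤
      ε * μ.real S ^ Fintype.card ι := by
  set S' : Set (ι → X) := univ.pi fun _ => S
  have hf_int : ∀ j i, Integrable (f j i) μ := fun j i =>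
    (f j i).continuous.integrable_of_hasCompactSupport
      (hS.of_isClosed_subset (isClosed_tsupport _) (hf j i))
  have hprod_int : ∀ j, Integrable (fun x : ι → X => ∏ i, f j i (x i)) (Measure.pi fun _ => μ) :=
    fun j => Integrable.fintype_prod (hf_int j)
  have hH_int : Integrable H (Measure.pi fun _ => μ) := hH.integrable_of_hasCompactSupport
    ((isCompact_univ_pi fun _ => hS).of_isClosed_subset (isClosed_tsupport H) hHS)
  have hsum : ∫ x, ∑ j, c j * ∏ i, f j i (x i) ∂Measure.pi (fun _ => μ) =
      ∑ j, c j * ∏ i, ∫ y, f j i y ∂μ := by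
    rw [integral_finsetSum _ fun j _ => (hprod_int j).const_mul (c j)]
    simp only [integral_const_mul, integral_fintype_prod_eq_prod]
  have hvanish : ∀ x ∉ S', H x - ∑ j, c j * ∏ i, f j i (x i) = 0 := by
    intro x hx
    obtain ⟨i, -, hi⟩ := by simpa only [S', mem_pi, not_forall] using hx
    have hHx : H x = 0 := image_eq_zero_of_notMem_tsupport fun h => hx (hHS h)
    rw [hHx, zero_sub, neg_eq_zero]
    exact Finset.sum_eq_zero fun j _ => by
      have hfi : f j i (x i) = 0 := image_eq_zero_of_notMem_tsupport fun h => hi (hf j i h)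
      rw [Finset.prod_eq_zero (Finset.mem_univ i) hfi, mul_zero]
  rw [← hsum, ← integral_sub hH_int (integrable_finsetSum _ fun j _ => (hprod_int j).const_mul _),
    ← setIntegral_eq_integral_of_forall_compl_eq_zero hvanish, ← Real.norm_eq_abs]
  refine (norm_setIntegral_le_of_norm_le_const ?_ fun x _ => hHf x).trans_eq ?_
  · rw [Measure.pi_pi]
    exact ENNReal.prod_lt_top fun _ _ => hS.measure_lt_top
  · simp [S', measureReal_def, Measure.pi_pi]

section LebesgueMarginal

variable {α β : Type*} [MeasurableSpace α] [MeasurableSpace β] {T : Set α} {ν : Measure α}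
  {m : Measure (T × β)}

lemma map_val_comp_fst_eq_restrict (hT : MeasurableSet T)
    (hm : m.map Prod.fst = ν.comap Subtype.val) :
    m.map (Subtype.val ∘ Prod.fst) = ν.restrict T := by
  rw [← Measure.map_map measurable_subtype_coe measurable_fst, hm,
    (MeasurableEmbedding.subtype_coe hT).map_comap, Subtype.range_coe]

lemma sigmaFinite_of_map_fst_eq_comap [SigmaFinite ν] (hT : MeasurableSet T)
    (hm : m.map Prod.fst = ν.comap Subtype.val) : SigmaFinite m :=
  SigmaFinite.of_map m (measurable_subtype_coe.comp measurable_fst).aemeasurable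
    (by rw [map_val_comp_fst_eq_restrict hT hm]; infer_instance)

lemma measure_le_of_map_fst_eq_comap (hT : MeasurableSet T)
    (hm : m.map Prod.fst = ν.comap Subtype.val) (s : Set (T × β)) :
    m s ≤ ν ((Subtype.val ∘ Prod.fst) '' s) :=
  calc m s ≤ m.map (Subtype.val ∘ Prod.fst) ((Subtype.val ∘ Prod.fst) '' s) :=
        Measure.le_map_apply_image (measurable_subtype_coe.comp measurable_fst).aemeasurable s
    _ ≤ ν ((Subtype.val ∘ Prod.fst) '' s) := by
        rw [map_val_comp_fst_eq_restrict hT hm]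
        exact Measure.restrict_apply_le _ _

lemma isFiniteMeasureOnCompacts_of_map_fst_eq_comap [TopologicalSpace α] [TopologicalSpace β]
    [IsFiniteMeasureOnCompacts ν] (hT : MeasurableSet T)
    (hm : m.map Prod.fst = ν.comap Subtype.val) : IsFiniteMeasureOnCompacts m :=
  ⟨fun s hs => (measure_le_of_map_fst_eq_comap hT hm s).trans_lt
    (hs.image (continuous_subtype_val.comp continuous_fst)).measure_lt_top⟩

end LebesgueMarginal

lemma HasCompactSupport.comp_isProperMap {X Y M : Type*} [TopologicalSpace X] [TopologicalSpace Y]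
    [Zero M] {f : Y → M} (hf : HasCompactSupport f) {φ : X → Y} (hφ : IsProperMap φ) :
    HasCompactSupport (f ∘ φ) :=
  (hφ.isCompact_preimage hf).of_isClosed_subset (isClosed_tsupport _)
    (tsupport_comp_subset_preimage f hφ.continuous)

lemma continuous_of_forall_abs_sub_le_mul {α : Type*} [TopologicalSpace α] {f : α → ℝ} (C : ℝ)
    (h : ∀ ε > 0, ∃ F : α → ℝ, Continuous F ∧ ∀ y, |f y - F y| ≤ C * ε) : Continuous f := by
  refine continuous_of_uniform_approx_of_continuous fun u hu => ?_
  obtain ⟨δ, hδ, hδu⟩ := Metric.mem_uniformity_dist.1 hu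
  obtain ⟨F, hF, hfF⟩ := h (δ / (|C| + 1)) (by positivity)
  refine ⟨F, hF, fun y => hδu ?_⟩
  calc dist (f y) (F y) ≤ C * (δ / (|C| + 1)) := hfF y
    _ ≤ |C| * (δ / (|C| + 1)) := by gcongr; exact le_abs_self C
    _ < δ := by rw [mul_div_assoc', div_lt_iff₀ (by positivity)]; nlinarith [abs_nonneg C]

lemma continuous_integral_vagueTopology {E : Type*} [TopologicalSpace E] [MeasurableSpace E]
    (f : CompactlySupportedContinuousMap E ℝ) :
    Continuous[vagueTopology E, _] fun μ : Measure E => ∫ x, f x ∂μ :=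
  continuous_iInf_dom (i := f) continuous_induced_dom

/-- For `F ∈ C_c(T^k)` and `g_1,…,g_k ∈ C(K)`, the function
`m ↦ ⟨m^{⊗k}, F ⊗ G_g⟩` is vaguely continuous on `M_λ`, the space of measures
on `T × K` whose spatial marginal is Lebesgue measure. -/
theorem Ik_vague_continuous (d : ℕ) (T : Set (EuclideanSpace ℝ (Fin d)))
    (hT : MeasurableSet T)
    (K : Type*) [MetricSpace K] [CompactSpace K] [MeasurableSpace K] [BorelSpace K]
    (k : ℕ) (F : (Fin k → T) → ℝ) (hF : Continuous F) (hFc : HasCompactSupport F)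
    (g : Fin k → K → ℝ) (hg : ∀ i, Continuous (g i)) :
    @Continuous {m : Measure (T × K) // m.map Prod.fst = Measure.comap Subtype.val volume}
      ℝ (TopologicalSpace.induced Subtype.val (vagueTopology (T × K))) inferInstance
      (fun m => ∫ x : Fin k → T × K,
        F (fun i => (x i).1) * ∏ i, g i (x i).2
          ∂(Measure.pi (fun _ : Fin k => (m : Measure (T × K))))) := by
  let _ := vagueTopology (T × K)
  set H : (Fin k → T × K) → ℝ := fun x => F (fun i => (x i).1) * ∏ i, g i (x i).2
  have hH : Continuous H := by fun_prop
  have hHc : HasCompactSupport H := HasCompactSupport.mul_right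
    (hFc.comp_isProperMap (IsProperMap.pi_map fun _ => isProperMap_fst_of_compactSpace))
  set S := coordinateSupport H
  set C := volume.real ((Subtype.val ∘ Prod.fst) '' S)
  have hS : IsCompact S := hHc.isCompact_coordinateSupport
  refine continuous_of_forall_abs_sub_le_mul (C ^ k) fun ε hε => ?_
  obtain ⟨n, c, f, hf, hHf⟩ := exists_sum_prod_near hH hHc hε
  refine ⟨fun m => ∑ j, c j * ∏ i, ∫ p, f j i p ∂(m : Measure (T × K)), ?_, fun m => ?_⟩
  · exact continuous_finsetSum _ fun j _ => continuous_const.mul <| continuous_finsetProd _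
      fun i _ => (continuous_integral_vagueTopology ⟨f j i, hS.of_isClosed_subset
        (isClosed_tsupport _) (hf j i)⟩).comp continuous_subtype_val
  have := sigmaFinite_of_map_fst_eq_comap hT m.2
  have := isFiniteMeasureOnCompacts_of_map_fst_eq_comap hT m.2
  have hmS : (m : Measure (T × K)).real S ≤ C := ENNReal.toReal_mono
    (hS.image (continuous_subtype_val.comp continuous_fst)).measure_lt_top.ne
    (measure_le_of_map_fst_eq_comap hT m.2 S)
  calc _ ≤ ε * (m : Measure (T × K)).real S ^ k := by
        simpa using abs_integral_pi_sub_sum_prod_le (m : Measure (T × K)) hS hH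
          (tsupport_subset_pi_coordinateSupport H) hf hHf
    _ ≤ C ^ k * ε := by rw [mul_comm]; gcongr
end

section
/- The linear span of the constant functions together with the functions m ↦ ⟨m^{⊗k}, F ⊗ G_g⟩ (for k ∈ ℕ, F ∈ C_c(T^k), g_1,…,g_k ∈ C(K)) is dense in the space of continuous real-valued functions on the compact space M_λ. -/
open MeasureTheory Topology

variable (d : ℕ) (T : Set (EuclideanSpace ℝ (Fin d)))
variable (K : Type*) [MetricSpace K] [CompactSpace K] [MeasurableSpace K] [BorelSpace K]

/-- The space `M_λ` of measures on `T × K` with spatial marginal Lebesgue measure. -/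
def Mlam : Type _ :=
  {m : Measure (T × K) // m.map Prod.fst = Measure.comap Subtype.val volume}

/-- The test function `I_k(·; F, g) : m ↦ ⟨m^{⊗k}, F ⊗ G_g⟩`. -/
noncomputable def IkFun (k : ℕ) (F : (Fin k → T) → ℝ) (g : Fin k → K → ℝ) :
    Mlam d T K → ℝ := fun m =>
  ∫ x : Fin k → T × K, F (fun i => (x i).1) * ∏ i, g i (x i).2
    ∂(Measure.pi (fun _ : Fin k => (m.1 : Measure (T × K))))

/-- The family of test functions: constants and the functions `I_k(·; F, g₁,…,g_k)`
with `F ∈ C_c(T^k)` and `g_i ∈ C(K)`. -/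
def testFuns : Set (Mlam d T K → ℝ) :=
  {f | ∃ c : ℝ, f = fun _ => c} ∪
  {f | ∃ (k : ℕ) (F : (Fin k → T) → ℝ) (g : Fin k → K → ℝ),
        Continuous F ∧ HasCompactSupport F ∧ (∀ i, Continuous (g i)) ∧
        f = IkFun d T K k F g}

/-!
`M_λ` is compact. Along an ultrafilter, the masses `m C` of compact sets `C ⊆ T × K` converge
(they are bounded by the `λ`-measure of the projection of `C`), and these limits form a content.
Its measure `μ₀` is at most the limit on open sets and at least the limit on compact sets, which
pins down its marginal by the regularity of `λ`, and it is the vague limit: by the layer-cake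
formula `∫ u = ∫₀^∞ m {u > t} dt`, the integrals against `μ₀` and their limit both lie between
Riemann sums of the limiting masses that differ by two layers.

`M_λ` need not be Hausdorff, so Stone–Weierstrass is applied on its separation quotient, to the
algebra generated by the integrals against `F ⊗ g` with `F ∈ C_c(T)`, `g ∈ C(K)`. These separate
points: cutting off by a function of `t ↦ sup_κ |f (t, κ)|` and applying Stone–Weierstrass on a
compact slab `S × K` approximates `f ∈ C_c(T × K)` uniformly by sums of such products supported in
a fixed slab. The generators are functions `I_1`, and the span of the test functions is an algebra
since `I_k(F, g) · I_l(F', g') = I_{k+l}(F ⊗ F', g ++ g')` by Fubini.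
-/

open Filter Set
open scoped ENNReal NNReal

section LayerSum

theorem sum_indicator_le_ofReal_sub (a : ℝ) {Δ : ℝ} (hΔ : 0 ≤ Δ) (n : ℕ) (s : ℝ) :
    ∑ j ∈ Finset.range n, {t : ℝ | (j + s + 1) * Δ < t}.indicator (fun _ => ENNReal.ofReal Δ) a
      ≤ ENNReal.ofReal (a - s * Δ) := by
  induction n generalizing s with
  | zero => simp
  | succ n ih =>
    have ih' : ∑ j ∈ Finset.range n,
        {t : ℝ | ((j + 1 : ℕ) + s + 1) * Δ < t}.indicator (fun _ => ENNReal.ofReal Δ) a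
        ≤ ENNReal.ofReal (a - (s + 1) * Δ) := by
      convert ih (s + 1) using 5; push_cast; ring_nf
    rw [Finset.sum_range_succ', Nat.cast_zero, zero_add]
    by_cases h : (s + 1) * Δ < a
    · calc _ ≤ ENNReal.ofReal (a - (s + 1) * Δ) + ENNReal.ofReal Δ := by
            gcongr
            exact indicator_le (fun _ _ => le_rfl) _
        _ = ENNReal.ofReal (a - s * Δ) := by
            rw [← ENNReal.ofReal_add (by linarith) hΔ]; ring_nf
    · rw [indicator_of_notMem (by simpa using h), add_zero]
      exact ih'.trans (ENNReal.ofReal_le_ofReal (by nlinarith))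

theorem ofReal_sub_le_sum_indicator (a Δ : ℝ) (n : ℕ) (s : ℝ) (ha : a ≤ (n + s) * Δ) :
    ENNReal.ofReal (a - s * Δ)
      ≤ ∑ j ∈ Finset.range n,
          {t : ℝ | (j + s) * Δ < t}.indicator (fun _ => ENNReal.ofReal Δ) a := by
  induction n generalizing s with
  | zero => simp [ENNReal.ofReal_of_nonpos (by simpa using ha : a - s * Δ ≤ 0)]
  | succ n ih =>
    have ih' : ENNReal.ofReal (a - (s + 1) * Δ) ≤ ∑ j ∈ Finset.range n,
        {t : ℝ | ((j + 1 : ℕ) + s) * Δ < t}.indicator (fun _ => ENNReal.ofReal Δ) a := by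
      convert ih (s + 1) (by push_cast at ha; linarith) using 5; push_cast; ring_nf
    rw [Finset.sum_range_succ', Nat.cast_zero, zero_add]
    by_cases h : s * Δ < a
    · rw [indicator_of_mem (by simpa using h)]
      calc ENNReal.ofReal (a - s * Δ) = ENNReal.ofReal (a - (s + 1) * Δ + Δ) := by ring_nf
        _ ≤ ENNReal.ofReal (a - (s + 1) * Δ) + ENNReal.ofReal Δ := ENNReal.ofReal_add_le
        _ ≤ _ := by gcongr
    · rw [ENNReal.ofReal_of_nonpos (by linarith)]
      exact bot_le

variable {α : Type*}

/-- A Riemann sum, with step `Δ` and the first `k` layers skipped, for the layer-cake integral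
`∫₀^∞ ν {u > t} dt`. -/
noncomputable def layerSum (ν : Set α → ℝ≥0∞) (u : α → ℝ) (Δ : ℝ) (k n : ℕ) : ℝ≥0∞ :=
  ∑ j ∈ Finset.range n, ENNReal.ofReal Δ * ν {x | ((j : ℝ) + k) * Δ < u x}

theorem layerSum_eq_lintegral [MeasurableSpace α] (ν : Measure α) {u : α → ℝ}
    (hu : Measurable u) (Δ : ℝ) (k n : ℕ) :
    layerSum ν u Δ k n = ∫⁻ x, ∑ j ∈ Finset.range n,
      {t : ℝ | ((j : ℝ) + k) * Δ < t}.indicator (fun _ => ENNReal.ofReal Δ) (u x) ∂ν := by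
  rw [lintegral_finsetSum]
  · exact Finset.sum_congr rfl fun j _ =>
      (lintegral_indicator_const (measurableSet_lt measurable_const hu) _).symm
  · exact fun j _ => (measurable_const.indicator measurableSet_Ioi).comp hu

theorem layerSum_one_le_lintegral [MeasurableSpace α] (ν : Measure α) {u : α → ℝ}
    (hu : Measurable u) {Δ : ℝ} (hΔ : 0 ≤ Δ) (n : ℕ) :
    layerSum ν u Δ 1 n ≤ ∫⁻ x, ENNReal.ofReal (u x) ∂ν := by
  rw [layerSum_eq_lintegral ν hu]
  refine lintegral_mono fun x => ?_
  simpa using sum_indicator_le_ofReal_sub (u x) hΔ n 0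

theorem lintegral_le_layerSum_zero [MeasurableSpace α] (ν : Measure α) {u : α → ℝ}
    (hu : Measurable u) {Δ : ℝ} {n : ℕ} (hn : ∀ x, u x ≤ n * Δ) :
    ∫⁻ x, ENNReal.ofReal (u x) ∂ν ≤ layerSum ν u Δ 0 n := by
  rw [layerSum_eq_lintegral ν hu]
  refine lintegral_mono fun x => ?_
  simpa using ofReal_sub_le_sum_indicator (u x) Δ n 0 (by simpa using hn x)

theorem layerSum_mono {ν ν' : Set α → ℝ≥0∞} {u : α → ℝ} {Δ : ℝ} {k k' n : ℕ}
    (h : ∀ j : ℕ, ν {x | ((j : ℝ) + k) * Δ < u x} ≤ ν' {x | ((j : ℝ) + k') * Δ < u x}) :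
    layerSum ν u Δ k n ≤ layerSum ν' u Δ k' n :=
  Finset.sum_le_sum fun j _ => by gcongr; exact h j

theorem layerSum_anti_shift {ν : Set α → ℝ≥0∞} (hν : Monotone ν) (u : α → ℝ) {Δ : ℝ}
    (hΔ : 0 ≤ Δ) {k k' : ℕ} (hk : k ≤ k') (n : ℕ) : layerSum ν u Δ k' n ≤ layerSum ν u Δ k n :=
  layerSum_mono fun _ => hν <| ofPred_subset_ofPred.2 fun _ => lt_of_le_of_lt (by gcongr)

theorem layerSum_zero_le_add (ν : Set α → ℝ≥0∞) (u : α → ℝ) (Δ : ℝ) (n : ℕ) :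
    layerSum ν u Δ 0 n ≤ layerSum ν u Δ 0 2 + layerSum ν u Δ 2 n := by
  calc layerSum ν u Δ 0 n ≤ layerSum ν u Δ 0 (2 + n) :=
        Finset.sum_le_sum_of_subset (Finset.range_mono (by omega))
    _ = _ := by
        simp only [layerSum, Finset.sum_range_add]
        congr! 6 with j
        push_cast; ring_nf

end LayerSum

section UltrafilterLimit

variable {ι α : Type*} [MeasurableSpace α]

/-- Since `ℝ≥0∞` is compact, `μs i A` converges to this value along `𝒰`. -/
noncomputable def ultraLim (𝒰 : Ultrafilter ι) (μs : ι → Measure α) (A : Set α) : ℝ≥0∞ :=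
  (𝒰.map fun i => μs i A).lim

variable (𝒰 : Ultrafilter ι) (μs : ι → Measure α)

theorem tendsto_ultraLim (A : Set α) : Tendsto (fun i => μs i A) 𝒰 (𝓝 (ultraLim 𝒰 μs A)) :=
  Ultrafilter.le_nhds_lim _

theorem ultraLim_mono {A B : Set α} (h : A ⊆ B) : ultraLim 𝒰 μs A ≤ ultraLim 𝒰 μs B :=
  le_of_tendsto_of_tendsto' (tendsto_ultraLim 𝒰 μs A) (tendsto_ultraLim 𝒰 μs B)
    fun _ => measure_mono h

theorem ultraLim_union {A B : Set α} (hAB : Disjoint A B) (hB : MeasurableSet B) :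
    ultraLim 𝒰 μs (A ∪ B) = ultraLim 𝒰 μs A + ultraLim 𝒰 μs B :=
  tendsto_nhds_unique (tendsto_ultraLim 𝒰 μs _) <| by
    simpa only [measure_union hAB hB] using
      (tendsto_ultraLim 𝒰 μs A).add (tendsto_ultraLim 𝒰 μs B)

theorem ultraLim_union_le (A B : Set α) :
    ultraLim 𝒰 μs (A ∪ B) ≤ ultraLim 𝒰 μs A + ultraLim 𝒰 μs B :=
  le_of_tendsto_of_tendsto' (tendsto_ultraLim 𝒰 μs _)
    ((tendsto_ultraLim 𝒰 μs A).add (tendsto_ultraLim 𝒰 μs B)) fun _ => measure_union_le _ _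

theorem tendsto_layerSum_ultraLim (u : α → ℝ) (Δ : ℝ) (k n : ℕ) :
    Tendsto (fun i => layerSum (μs i) u Δ k n) 𝒰 (𝓝 (layerSum (ultraLim 𝒰 μs) u Δ k n)) :=
  tendsto_finsetSum _ fun _ _ =>
    ENNReal.Tendsto.const_mul (tendsto_ultraLim 𝒰 μs _) (Or.inr ENNReal.ofReal_ne_top)

variable [TopologicalSpace α] [OpensMeasurableSpace α]

noncomputable def ultraLimContent (hfin : ∀ C, IsCompact C → ultraLim 𝒰 μs C ≠ ∞) :
    Content α where
  toFun C := (ultraLim 𝒰 μs C).toNNReal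
  mono' C₁ C₂ h := ENNReal.toNNReal_mono (hfin _ C₂.isCompact) (ultraLim_mono 𝒰 μs h)
  sup_disjoint' C₁ C₂ h _ h₂ := by
    rw [TopologicalSpace.Compacts.coe_sup, ultraLim_union 𝒰 μs h h₂.measurableSet]
    exact ENNReal.toNNReal_add (hfin _ C₁.isCompact) (hfin _ C₂.isCompact)
  sup_le' C₁ C₂ := by
    rw [TopologicalSpace.Compacts.coe_sup,
      ← ENNReal.toNNReal_add (hfin _ C₁.isCompact) (hfin _ C₂.isCompact)]
    exact ENNReal.toNNReal_mono (ENNReal.add_ne_top.2 ⟨hfin _ C₁.isCompact, hfin _ C₂.isCompact⟩)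
      (ultraLim_union_le 𝒰 μs _ _)

theorem ultraLimContent_apply (hfin : ∀ C, IsCompact C → ultraLim 𝒰 μs C ≠ ∞)
    (C : TopologicalSpace.Compacts α) : ultraLimContent 𝒰 μs hfin C = ultraLim 𝒰 μs C :=
  ENNReal.coe_toNNReal (hfin _ C.isCompact)

variable [T2Space α] [BorelSpace α] (hfin : ∀ C, IsCompact C → ultraLim 𝒰 μs C ≠ ∞)

theorem ultraLimContent_measure_le {U : Set α} (hU : IsOpen U) :
    (ultraLimContent 𝒰 μs hfin).measure U ≤ ultraLim 𝒰 μs U := by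
  rw [Content.measure_apply _ hU.measurableSet, Content.outerMeasure_of_isOpen _ _ hU]
  exact iSup₂_le fun C hC => (ultraLimContent_apply 𝒰 μs hfin C).trans_le (ultraLim_mono 𝒰 μs hC)

theorem ultraLim_le_ultraLimContent_measure {C : Set α} (hC : IsCompact C) :
    ultraLim 𝒰 μs C ≤ (ultraLimContent 𝒰 μs hfin).measure C := by
  rw [Content.measure_apply _ hC.measurableSet]
  exact (ultraLimContent_apply 𝒰 μs hfin ⟨C, hC⟩).symm.trans_le
    ((ultraLimContent 𝒰 μs hfin).le_outerMeasure_compacts ⟨C, hC⟩)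

end UltrafilterLimit

theorem setOf_lt_subset_tsupport {α : Type*} [TopologicalSpace α] {u : α → ℝ} {c : ℝ}
    (hc : 0 ≤ c) : {x | c < u x} ⊆ tsupport u :=
  fun _ hx => subset_tsupport _ (ne_of_gt (hc.trans_lt hx))

theorem HasCompactSupport.isCompact_setOf_le {α : Type*} [TopologicalSpace α] {u : α → ℝ}
    (hsupp : HasCompactSupport u) (hu : Continuous u) {c : ℝ} (hc : 0 < c) :
    IsCompact {x | c ≤ u x} :=
  hsupp.of_isClosed_subset (isClosed_le continuous_const hu)
    fun _ hx => subset_tsupport _ (ne_of_gt (hc.trans_le hx))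

section VagueLimit

variable {ι α : Type*} [MeasurableSpace α] [TopologicalSpace α]
  (𝒰 : Ultrafilter ι) (μs : ι → Measure α) {μ : Measure α} {u : α → ℝ}

theorem layerSum_ultraLim_zero_le_add (hcpt : ∀ C, IsCompact C → ultraLim 𝒰 μs C ≤ μ C)
    (hsupp : HasCompactSupport u) {Δ : ℝ} (hΔ : 0 ≤ Δ) (n : ℕ) :
    layerSum (ultraLim 𝒰 μs) u Δ 0 n
      ≤ ENNReal.ofReal Δ * (2 * μ (tsupport u)) + layerSum (ultraLim 𝒰 μs) u Δ 2 n := by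
  refine (layerSum_zero_le_add _ u Δ n).trans (add_le_add_left ?_ _)
  calc layerSum (ultraLim 𝒰 μs) u Δ 0 2
      ≤ ∑ _j ∈ Finset.range 2, ENNReal.ofReal Δ * μ (tsupport u) :=
        Finset.sum_le_sum fun j _ => by
          gcongr
          exact (ultraLim_mono 𝒰 μs (setOf_lt_subset_tsupport (by positivity))).trans
            (hcpt _ hsupp)
    _ = _ := by rw [Finset.sum_const, Finset.card_range, nsmul_eq_mul]; ring

variable [OpensMeasurableSpace α]

theorem layerSum_ultraLim_two_le_lintegral (hcpt : ∀ C, IsCompact C → ultraLim 𝒰 μs C ≤ μ C)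
    (hu : Continuous u) (hsupp : HasCompactSupport u) {Δ : ℝ} (hΔ : 0 < Δ) (n : ℕ) :
    layerSum (ultraLim 𝒰 μs) u Δ 2 n ≤ ∫⁻ x, ENNReal.ofReal (u x) ∂μ := by
  refine (layerSum_mono fun j => ?_).trans (layerSum_one_le_lintegral μ hu.measurable hΔ.le n)
  have hlt : ((j : ℝ) + (1 : ℕ)) * Δ < ((j : ℝ) + (2 : ℕ)) * Δ := by push_cast; nlinarith
  calc ultraLim 𝒰 μs {x | ((j : ℝ) + (2 : ℕ)) * Δ < u x}
      ≤ ultraLim 𝒰 μs {x | ((j : ℝ) + (2 : ℕ)) * Δ ≤ u x} :=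
        ultraLim_mono 𝒰 μs (ofPred_subset_ofPred.2 fun _ => le_of_lt)
    _ ≤ μ _ := hcpt _ (hsupp.isCompact_setOf_le hu (by positivity))
    _ ≤ μ _ := measure_mono (ofPred_subset_ofPred.2 fun _ => hlt.trans_le)

theorem lintegral_squeeze_of_ultraLim (hopen : ∀ U, IsOpen U → μ U ≤ ultraLim 𝒰 μs U)
    (hcpt : ∀ C, IsCompact C → ultraLim 𝒰 μs C ≤ μ C) (hu : Continuous u)
    (hsupp : HasCompactSupport u) {L : ℝ≥0∞}
    (hL : Tendsto (fun i => ∫⁻ x, ENNReal.ofReal (u x) ∂μs i) 𝒰 (𝓝 L)) {Δ : ℝ} (hΔ : 0 < Δ) :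
    L ≤ ∫⁻ x, ENNReal.ofReal (u x) ∂μ + ENNReal.ofReal Δ * (2 * μ (tsupport u)) ∧
      ∫⁻ x, ENNReal.ofReal (u x) ∂μ ≤ L + ENNReal.ofReal Δ * (2 * μ (tsupport u)) := by
  obtain ⟨n, hn⟩ : ∃ n : ℕ, ∀ x, u x ≤ n * Δ := by
    obtain ⟨M, hM⟩ := hsupp.exists_bound_of_continuous hu
    refine ⟨⌈M / Δ⌉₊, fun x => (le_abs_self _).trans ((hM x).trans ?_)⟩
    rw [← div_le_iff₀ hΔ]
    exact Nat.le_ceil _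
  -- Both `L` and `∫⁻ u ∂μ` lie between the layer sums of `ultraLim 𝒰 μs` with shifts `2` and `0`.
  have hL_le : L ≤ layerSum (ultraLim 𝒰 μs) u Δ 0 n :=
    le_of_tendsto_of_tendsto' hL (tendsto_layerSum_ultraLim 𝒰 μs u Δ 0 n)
      fun i => lintegral_le_layerSum_zero _ hu.measurable hn
  have hle_L : layerSum (ultraLim 𝒰 μs) u Δ 2 n ≤ L :=
    (layerSum_anti_shift (fun _ _ => ultraLim_mono 𝒰 μs) u hΔ.le one_le_two n).trans
      (le_of_tendsto_of_tendsto' (tendsto_layerSum_ultraLim 𝒰 μs u Δ 1 n) hL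
        fun i => layerSum_one_le_lintegral _ hu.measurable hΔ.le n)
  have hI_le : ∫⁻ x, ENNReal.ofReal (u x) ∂μ ≤ layerSum (ultraLim 𝒰 μs) u Δ 0 n :=
    (lintegral_le_layerSum_zero μ hu.measurable hn).trans
      (layerSum_mono fun j => hopen _ (isOpen_lt continuous_const hu))
  have hle_I := layerSum_ultraLim_two_le_lintegral 𝒰 μs hcpt hu hsupp hΔ n
  have hgap := layerSum_ultraLim_zero_le_add 𝒰 μs hcpt hsupp hΔ.le n
  constructor
  · calc L ≤ _ := hL_le.trans hgap
      _ ≤ _ := by rw [add_comm]; gcongr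
  · calc _ ≤ _ := hI_le.trans hgap
      _ ≤ _ := by rw [add_comm]; gcongr

theorem tendsto_lintegral_of_ultraLim [IsFiniteMeasureOnCompacts μ]
    (hopen : ∀ U, IsOpen U → μ U ≤ ultraLim 𝒰 μs U)
    (hcpt : ∀ C, IsCompact C → ultraLim 𝒰 μs C ≤ μ C) (hu : Continuous u)
    (hsupp : HasCompactSupport u) :
    Tendsto (fun i => ∫⁻ x, ENNReal.ofReal (u x) ∂μs i) 𝒰
      (𝓝 (∫⁻ x, ENNReal.ofReal (u x) ∂μ)) := by
  set L := (𝒰.map fun i => ∫⁻ x, ENNReal.ofReal (u x) ∂μs i).lim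
  have hL : Tendsto (fun i => ∫⁻ x, ENNReal.ofReal (u x) ∂μs i) 𝒰 (𝓝 L) :=
    Ultrafilter.le_nhds_lim _
  suffices h : ∫⁻ x, ENNReal.ofReal (u x) ∂μ = L by rwa [h]
  have hsmall : Tendsto (fun Δ => ENNReal.ofReal Δ * (2 * μ (tsupport u))) (𝓝[>] 0) (𝓝 0) := by
    simpa using ENNReal.Tendsto.mul_const
      ((ENNReal.continuous_ofReal.tendsto 0).mono_left nhdsWithin_le_nhds)
      (Or.inr (ENNReal.mul_ne_top (by simp) hsupp.measure_lt_top.ne))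
  have hsq := fun Δ (hΔ : Δ ∈ Ioi (0 : ℝ)) =>
    lintegral_squeeze_of_ultraLim 𝒰 μs hopen hcpt hu hsupp hL hΔ
  refine le_antisymm ?_ ?_
  · exact ge_of_tendsto (by simpa using hsmall.const_add _)
      (eventually_mem_nhdsWithin.mono fun Δ hΔ => (hsq Δ hΔ).2)
  · exact ge_of_tendsto (by simpa using hsmall.const_add _)
      (eventually_mem_nhdsWithin.mono fun Δ hΔ => (hsq Δ hΔ).1)

theorem tendsto_integral_of_ultraLim [∀ i, IsFiniteMeasureOnCompacts (μs i)]
    [IsFiniteMeasureOnCompacts μ] (hopen : ∀ U, IsOpen U → μ U ≤ ultraLim 𝒰 μs U)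
    (hcpt : ∀ C, IsCompact C → ultraLim 𝒰 μs C ≤ μ C) {f : α → ℝ} (hf : Continuous f)
    (hsupp : HasCompactSupport f) :
    Tendsto (fun i => ∫ x, f x ∂μs i) 𝒰 (𝓝 (∫ x, f x ∂μ)) := by
  have hpart : ∀ u : α → ℝ, Continuous u → HasCompactSupport u →
      Tendsto (fun i => (∫⁻ x, ENNReal.ofReal (u x) ∂μs i).toReal) 𝒰
        (𝓝 (∫⁻ x, ENNReal.ofReal (u x) ∂μ).toReal) := fun u hu hsu =>
    (ENNReal.tendsto_toReal (hu.integrable_of_hasCompactSupport hsu).lintegral_lt_top.ne).comp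
      (tendsto_lintegral_of_ultraLim 𝒰 μs hopen hcpt hu hsu)
  rw [integral_eq_lintegral_pos_part_sub_lintegral_neg_part
    (hf.integrable_of_hasCompactSupport hsupp)]
  exact ((hpart f hf hsupp).sub (hpart (fun x => -f x) hf.neg hsupp.neg)).congr fun i =>
    (integral_eq_lintegral_pos_part_sub_lintegral_neg_part
      (hf.integrable_of_hasCompactSupport hsupp)).symm

end VagueLimit

theorem MeasureTheory.Measure.eq_of_isOpen_le_of_isCompact_le {α : Type*} [TopologicalSpace α]
    [MeasurableSpace α] {ν μ : Measure α} [μ.OuterRegular] [μ.InnerRegular]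
    (hopen : ∀ U, IsOpen U → ν U ≤ μ U) (hcpt : ∀ C, IsCompact C → μ C ≤ ν C) : ν = μ := by
  ext A hA
  refine le_antisymm ?_ ?_
  · rw [A.measure_eq_iInf_isOpen μ]
    exact le_iInf₂ fun U hAU => le_iInf fun hU => (measure_mono hAU).trans (hopen U hU)
  · rw [hA.measure_eq_iSup_isCompact μ]
    exact iSup₂_le fun C hCA => iSup_le fun hC => (hcpt C hC).trans (measure_mono hCA)

theorem MeasureTheory.Measure.innerRegular_comap_subtype {β : Type*} [TopologicalSpace β]
    [MeasurableSpace β] {s : Set β} (hs : MeasurableSet s) (μ : Measure β) [μ.InnerRegular] :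
    (μ.comap ((↑) : s → β)).InnerRegular :=
  ⟨Measure.InnerRegular.innerRegular.comap (MeasurableEmbedding.subtype_coe hs)
    (fun _ hU => (MeasurableEmbedding.subtype_coe hs).measurableSet_image' hU)
    (fun _ hK hKc => IsInducing.subtypeVal.isCompact_preimage' hKc hK)⟩

theorem MeasureTheory.isFiniteMeasureOnCompacts_of_map_fst {X Y : Type*} [TopologicalSpace X]
    [T2Space X] [MeasurableSpace X] [OpensMeasurableSpace X] [TopologicalSpace Y]
    [MeasurableSpace Y] {μ : Measure (X × Y)} [IsFiniteMeasureOnCompacts (μ.map Prod.fst)] :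
    IsFiniteMeasureOnCompacts μ := by
  refine ⟨fun C hC => (measure_mono (subset_preimage_image Prod.fst C)).trans_lt ?_⟩
  have hC' := hC.image continuous_fst
  rw [← Measure.map_apply measurable_fst hC'.measurableSet]
  exact hC'.measure_lt_top

section Mlam

open scoped CompactlySupported

variable {d : ℕ} {T : Set (EuclideanSpace ℝ (Fin d))} {K : Type*} [MeasurableSpace K]

theorem Mlam.measure_fst_preimage (m : Mlam d T K) {A : Set T} (hA : MeasurableSet A) :
    m.1 (Prod.fst ⁻¹' A) = Measure.comap Subtype.val volume A := by
  rw [← Measure.map_apply measurable_fst hA, m.2]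

theorem Mlam.sigmaFinite (hT : MeasurableSet T) (m : Mlam d T K) : SigmaFinite m.1 := by
  refine SigmaFinite.of_map _ measurable_fst.aemeasurable ?_
  rw [m.2]
  refine SigmaFinite.of_map _ measurable_subtype_coe.aemeasurable ?_
  rw [map_comap_subtype_coe hT]
  infer_instance

theorem Mlam.ultraLim_fst_preimage (𝒰 : Ultrafilter (Mlam d T K)) {A : Set T}
    (hA : MeasurableSet A) :
    ultraLim 𝒰 (fun m => m.1) (Prod.fst ⁻¹' A) = Measure.comap Subtype.val volume A :=
  tendsto_nhds_unique (tendsto_ultraLim 𝒰 _ _) <| by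
    simp_rw [Mlam.measure_fst_preimage _ hA]
    exact tendsto_const_nhds

variable [TopologicalSpace K]

noncomputable instance : TopologicalSpace (Mlam d T K) :=
  .induced (fun m : Mlam d T K => m.1) (vagueTopology (T × K))

theorem Mlam.isFiniteMeasureOnCompacts (hT : MeasurableSet T) (m : Mlam d T K) :
    IsFiniteMeasureOnCompacts m.1 := by
  have := IsFiniteMeasureOnCompacts.comap' volume continuous_subtype_val
    (MeasurableEmbedding.subtype_coe hT)
  rw [← m.2] at this
  exact isFiniteMeasureOnCompacts_of_map_fst

noncomputable def Mlam.integrals : Mlam d T K → C_c(T × K, ℝ) → ℝ :=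
  fun m f => ∫ x, f x ∂m.1

theorem Mlam.isInducing_integrals : IsInducing (Mlam.integrals (d := d) (T := T) (K := K)) := by
  constructor
  show TopologicalSpace.induced _ (vagueTopology (T × K)) = _
  rw [vagueTopology, induced_iInf, Pi.topologicalSpace, induced_iInf]
  refine iInf_congr fun f => ?_
  rw [induced_compose, induced_compose]
  rfl

theorem Mlam.continuous_integral {f : T × K → ℝ} (hf : Continuous f)
    (hfs : HasCompactSupport f) : Continuous fun m : Mlam d T K => ∫ x, f x ∂m.1 :=
  (continuous_apply ⟨⟨f, hf⟩, hfs⟩).comp Mlam.isInducing_integrals.continuous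

theorem Mlam.ultraLim_ne_top (hT : MeasurableSet T) (𝒰 : Ultrafilter (Mlam d T K))
    {C : Set (T × K)} (hC : IsCompact C) : ultraLim 𝒰 (fun m => m.1) C ≠ ∞ := by
  have hC' := hC.image continuous_fst
  have := IsFiniteMeasureOnCompacts.comap' volume continuous_subtype_val
    (MeasurableEmbedding.subtype_coe hT)
  refine ne_top_of_le_ne_top ?_ (ultraLim_mono 𝒰 _ (subset_preimage_image Prod.fst C))
  rw [Mlam.ultraLim_fst_preimage 𝒰 hC'.measurableSet]
  exact hC'.measure_lt_top.ne

end Mlam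

section Compactness

variable {d : ℕ} {T : Set (EuclideanSpace ℝ (Fin d))} {K : Type*} [MetricSpace K]
  [CompactSpace K] [MeasurableSpace K] [BorelSpace K]

theorem Mlam.map_fst_ultraLimContent (hT : MeasurableSet T) (𝒰 : Ultrafilter (Mlam d T K)) :
    (ultraLimContent 𝒰 (fun m => m.1) fun _ => Mlam.ultraLim_ne_top hT 𝒰).measure.map Prod.fst
      = Measure.comap Subtype.val volume := by
  have := Measure.OuterRegular.comap' volume continuous_subtype_val
    (MeasurableEmbedding.subtype_coe hT)
  have := Measure.innerRegular_comap_subtype hT volume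
  refine Measure.eq_of_isOpen_le_of_isCompact_le (fun U hU => ?_) (fun C hC => ?_)
  · rw [Measure.map_apply measurable_fst hU.measurableSet,
      ← Mlam.ultraLim_fst_preimage 𝒰 hU.measurableSet]
    exact ultraLimContent_measure_le _ _ _ (hU.preimage continuous_fst)
  · rw [Measure.map_apply measurable_fst hC.measurableSet,
      ← Mlam.ultraLim_fst_preimage 𝒰 hC.measurableSet, ← prod_univ]
    exact ultraLim_le_ultraLimContent_measure _ _ _ (hC.prod isCompact_univ)

theorem Mlam.compactSpace (hT : MeasurableSet T) : CompactSpace (Mlam d T K) := by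
  refine ⟨isCompact_iff_ultrafilter_le_nhds.2 fun 𝒰 _ => ?_⟩
  have := Mlam.isFiniteMeasureOnCompacts (K := K) hT
  let m₀ : Mlam d T K := ⟨_, Mlam.map_fst_ultraLimContent hT 𝒰⟩
  have := Mlam.isFiniteMeasureOnCompacts hT m₀
  refine ⟨m₀, mem_univ _, ?_⟩
  rw [Mlam.isInducing_integrals.nhds_eq_comap, ← tendsto_iff_comap, tendsto_pi_nhds]
  exact fun f => tendsto_integral_of_ultraLim 𝒰 (fun m => m.1)
    (fun _ => ultraLimContent_measure_le _ _ _)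
    (fun _ => ultraLim_le_ultraLimContent_measure _ _ _) f.continuous f.hasCompactSupport

end Compactness

section ProductApproximation

variable {X Y : Type*}

def prodMulSubmonoid (X Y : Type*) [TopologicalSpace X] [TopologicalSpace Y] :
    Submonoid C(X × Y, ℝ) where
  carrier := {h | ∃ (F : C(X, ℝ)) (g : C(Y, ℝ)), h = F.comp .fst * g.comp .snd}
  mul_mem' := by
    rintro _ _ ⟨F, g, rfl⟩ ⟨F', g', rfl⟩
    refine ⟨F * F', g * g', ?_⟩
    ext
    simp only [ContinuousMap.mul_apply, ContinuousMap.comp_apply]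
    ring
  one_mem' := ⟨1, 1, by ext; simp⟩

theorem separatesPoints_adjoin_prodMulSubmonoid [MetricSpace X] [MetricSpace Y] :
    (Algebra.adjoin ℝ (prodMulSubmonoid X Y : Set C(X × Y, ℝ))).SeparatesPoints := by
  intro p q hpq
  let distX : C(X, ℝ) := ⟨(dist · p.1), by fun_prop⟩
  let distY : C(Y, ℝ) := ⟨(dist · p.2), by fun_prop⟩
  refine ⟨_, ⟨distX.comp .fst * (1 : C(Y, ℝ)).comp .snd
      + (1 : C(X, ℝ)).comp .fst * distY.comp .snd,
    add_mem (Algebra.subset_adjoin ⟨_, _, rfl⟩) (Algebra.subset_adjoin ⟨_, _, rfl⟩), rfl⟩, ?_⟩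
  have : 0 < dist q.1 p.1 + dist q.2 p.2 := by
    rcases ne_or_eq q.1 p.1 with h | h
    · exact add_pos_of_pos_of_nonneg (dist_pos.2 h) dist_nonneg
    · exact add_pos_of_nonneg_of_pos dist_nonneg (dist_pos.2 fun h' => hpq (Prod.ext h h').symm)
  simpa [distX, distY] using this.ne

-- `X` need not be locally compact, so the cutoff is a function of `t ↦ sup_y |f (t, y)|` rather
-- than a bump function around the support of `f`.
theorem exists_cutoff_of_hasCompactSupport [TopologicalSpace X] [TopologicalSpace Y]
    [CompactSpace Y] (f : C(X × Y, ℝ)) (hf : HasCompactSupport f) {c : ℝ} (hc : 0 < c) :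
    ∃ θ : C(X, ℝ), tsupport θ ⊆ Prod.fst '' tsupport f ∧ HasCompactSupport θ ∧
      (∀ t, θ t ∈ Icc 0 1) ∧ ∀ x, θ x.1 < 1 → |f x| < c := by
  let F₀ : C(X, ℝ) := ⟨fun t => ‖f.curry t‖, f.curry.continuous.norm⟩
  have hfF₀ : ∀ x : X × Y, |f x| ≤ F₀ x.1 := fun x => (f.curry x.1).norm_coe_le_norm x.2
  have hF₀ : {t | c / 2 ≤ F₀ t} ⊆ Prod.fst '' tsupport f := by
    intro t ht
    have ht' : c / 2 ≤ ‖f.curry t‖ := ht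
    obtain ⟨y, hy⟩ := DFunLike.ne_iff.1 (norm_pos_iff.1 ((half_pos hc).trans_le ht'))
    exact ⟨(t, y), subset_tsupport _ hy, rfl⟩
  let θ : C(X, ℝ) := ⟨fun t => min 1 (max 0 (2 * F₀ t / c - 1)), by fun_prop⟩
  have hθ_supp : tsupport θ ⊆ {t | c / 2 ≤ F₀ t} := by
    refine closure_minimal (fun t ht => ?_) (isClosed_le continuous_const F₀.continuous)
    by_contra hlt
    have : 2 * F₀ t / c - 1 ≤ 0 := by
      rw [sub_nonpos, div_le_one hc]
      linarith [not_le.1 (show ¬c / 2 ≤ F₀ t from hlt)]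
    exact ht (by simp [θ, max_eq_left this])
  refine ⟨θ, hθ_supp.trans hF₀,
    (hf.image continuous_fst).of_isClosed_subset (isClosed_tsupport _) (hθ_supp.trans hF₀),
    fun t => ⟨le_min zero_le_one (le_max_left _ _), min_le_left _ _⟩, fun x hx => ?_⟩
  refine (hfF₀ x).trans_lt (not_le.1 fun hcx => hx.ne (min_eq_left (le_max_of_le_right ?_)))
  rw [le_sub_iff_add_le, le_div_iff₀ hc]
  linarith

theorem exists_cutoff_mul_near [MetricSpace X] [MetricSpace Y] [CompactSpace Y]
    (f : C(X × Y, ℝ)) (hf : HasCompactSupport f) {ε : ℝ} (hε : 0 < ε) :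
    ∃ θ : C(X, ℝ), tsupport θ ⊆ Prod.fst '' tsupport f ∧ HasCompactSupport θ ∧
      ∃ Q ∈ Submodule.span ℝ (prodMulSubmonoid X Y : Set C(X × Y, ℝ)),
        ∀ x, |f x - θ x.1 * Q x| ≤ ε := by
  obtain ⟨θ, hθf, hθ, hθ01, hθ1⟩ := exists_cutoff_of_hasCompactSupport f hf (half_pos hε)
  obtain ⟨Q, hQ, hQf⟩ :=
    ContinuousMap.exists_mem_subalgebra_near_continuous_of_isCompact_of_separatesPoints
      separatesPoints_adjoin_prodMulSubmonoid f (hθ.prod isCompact_univ) (half_pos hε)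
  rw [← Subalgebra.mem_toSubmodule, Algebra.adjoin_eq_span, Submonoid.closure_eq] at hQ
  refine ⟨θ, hθf, hθ, Q, hQ, fun x => ?_⟩
  obtain ⟨hθ0, hθ1'⟩ := hθ01 x.1
  have hfar : (1 - θ x.1) * |f x| ≤ ε / 2 := by
    rcases hθ1'.lt_or_eq with h | h
    · nlinarith [hθ1 x h, abs_nonneg (f x)]
    · simp [h, (half_pos hε).le]
  have hnear : θ x.1 * |f x - Q x| ≤ ε / 2 := by
    by_cases hx : x.1 ∈ tsupport θ
    · have := hQf x ⟨hx, trivial⟩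
      rw [Real.norm_eq_abs, abs_sub_comm] at this
      nlinarith [abs_nonneg (f x - Q x)]
    · simp [image_eq_zero_of_notMem_tsupport hx, (half_pos hε).le]
  calc |f x - θ x.1 * Q x| = |(1 - θ x.1) * f x + θ x.1 * (f x - Q x)| := by ring_nf
    _ ≤ (1 - θ x.1) * |f x| + θ x.1 * |f x - Q x| := by
        refine (abs_add_le _ _).trans_eq ?_
        rw [abs_mul, abs_mul, abs_of_nonneg (sub_nonneg.2 hθ1'), abs_of_nonneg hθ0]
    _ ≤ ε := by linarith

end ProductApproximation

theorem abs_integral_le_mul_measureReal {α : Type*} [MeasurableSpace α] {ρ : Measure α}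
    {h : α → ℝ} {A : Set α} (hA : ρ A < ∞) {C : ℝ} (hC : ∀ x ∈ A, |h x| ≤ C)
    (h0 : ∀ x ∉ A, h x = 0) : |∫ x, h x ∂ρ| ≤ C * ρ.real A := by
  rw [← setIntegral_eq_integral_of_forall_compl_eq_zero h0, ← Real.norm_eq_abs]
  exact norm_setIntegral_le_of_norm_le_const hA hC

theorem HasCompactSupport.comp_fst_mul {X Y : Type*} [TopologicalSpace X] [TopologicalSpace Y]
    [R1Space (X × Y)] [CompactSpace Y] {θ : X → ℝ} (hθ : HasCompactSupport θ) (q : X × Y → ℝ) :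
    HasCompactSupport fun x => θ x.1 * q x :=
  .intro (hθ.prod isCompact_univ) fun x hx => by
    rw [image_eq_zero_of_notMem_tsupport fun h => hx ⟨h, trivial⟩, zero_mul]

section IntegralDetermination

variable {X Y : Type*} [MetricSpace X] [MetricSpace Y] [CompactSpace Y] [MeasurableSpace X]
  [MeasurableSpace Y] [OpensMeasurableSpace (X × Y)] {μ ν : Measure (X × Y)}
  [IsFiniteMeasureOnCompacts μ] [IsFiniteMeasureOnCompacts ν]

theorem integral_cutoff_mul_eq
    (h : ∀ F : C(X, ℝ), HasCompactSupport F → ∀ g : C(Y, ℝ),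
      ∫ x, F x.1 * g x.2 ∂μ = ∫ x, F x.1 * g x.2 ∂ν)
    {θ : C(X, ℝ)} (hθ : HasCompactSupport θ) {Q : C(X × Y, ℝ)}
    (hQ : Q ∈ Submodule.span ℝ (prodMulSubmonoid X Y : Set C(X × Y, ℝ))) :
    ∫ x, θ x.1 * Q x ∂μ = ∫ x, θ x.1 * Q x ∂ν := by
  have hint (ρ : Measure (X × Y)) [IsFiniteMeasureOnCompacts ρ] (Q : C(X × Y, ℝ)) :
      Integrable (fun x => θ x.1 * Q x) ρ :=
    (by fun_prop : Continuous _).integrable_of_hasCompactSupport (hθ.comp_fst_mul _)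
  let L (ρ : Measure (X × Y)) [IsFiniteMeasureOnCompacts ρ] : C(X × Y, ℝ) →ₗ[ℝ] ℝ :=
    { toFun Q := ∫ x, θ x.1 * Q x ∂ρ
      map_add' Q₁ Q₂ := by
        simp only [ContinuousMap.add_apply, mul_add]
        exact integral_add (hint ρ Q₁) (hint ρ Q₂)
      map_smul' r Q := by
        simp only [ContinuousMap.smul_apply, smul_eq_mul, RingHom.id_apply, ← integral_const_mul]
        simp_rw [mul_left_comm] }
  refine (Submodule.span_le (p := LinearMap.eqLocus (L μ) (L ν))).2 ?_ hQ
  rintro _ ⟨F, g, rfl⟩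
  change ∫ x, θ x.1 * (F x.1 * g x.2) ∂μ = ∫ x, θ x.1 * (F x.1 * g x.2) ∂ν
  simpa only [ContinuousMap.mul_apply, ContinuousMap.comp_apply, mul_assoc] using
    h (θ * F) hθ.mul_right g

theorem integral_eq_of_forall_integral_mul_eq
    (h : ∀ F : C(X, ℝ), HasCompactSupport F → ∀ g : C(Y, ℝ),
      ∫ x, F x.1 * g x.2 ∂μ = ∫ x, F x.1 * g x.2 ∂ν)
    (f : C(X × Y, ℝ)) (hf : HasCompactSupport f) : ∫ x, f x ∂μ = ∫ x, f x ∂ν := by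
  refine eq_of_forall_dist_le fun η hη => ?_
  set S := Prod.fst '' tsupport f
  have hS : IsCompact (S ×ˢ (univ : Set Y)) := (hf.image continuous_fst).prod isCompact_univ
  set B := μ.real (S ×ˢ univ) + ν.real (S ×ˢ univ)
  have hB : 0 ≤ B := by positivity
  obtain ⟨θ, hθS, hθ, Q, hQ, hfQ⟩ :=
    exists_cutoff_mul_near f hf (ε := η / (B + 1)) (by positivity)
  have hvanish : ∀ x ∉ S ×ˢ univ, f x - θ x.1 * Q x = 0 := by
    intro x hx
    have hx1 : x.1 ∉ S := fun h => hx ⟨h, trivial⟩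
    rw [image_eq_zero_of_notMem_tsupport fun h => hx1 ⟨x, h, rfl⟩,
      image_eq_zero_of_notMem_tsupport fun h => hx1 (hθS h)]
    ring
  have hbound (ρ : Measure (X × Y)) [IsFiniteMeasureOnCompacts ρ] :
      |∫ x, f x ∂ρ - ∫ x, θ x.1 * Q x ∂ρ| ≤ η / (B + 1) * ρ.real (S ×ˢ univ) := by
    rw [← integral_sub (f.continuous.integrable_of_hasCompactSupport hf)
      ((by fun_prop : Continuous _).integrable_of_hasCompactSupport (hθ.comp_fst_mul _))]
    exact abs_integral_le_mul_measureReal hS.measure_lt_top (fun x _ => hfQ x) hvanish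
  rw [Real.dist_eq]
  calc |∫ x, f x ∂μ - ∫ x, f x ∂ν|
      = |(∫ x, f x ∂μ - ∫ x, θ x.1 * Q x ∂μ) - (∫ x, f x ∂ν - ∫ x, θ x.1 * Q x ∂ν)| := by
        rw [integral_cutoff_mul_eq h hθ hQ]; ring_nf
    _ ≤ η / (B + 1) * B :=
        (abs_sub _ _).trans ((add_le_add (hbound μ) (hbound ν)).trans_eq (by ring))
    _ ≤ η := by
        rw [div_mul_eq_mul_div, div_le_iff₀ (by positivity)]
        nlinarith

end IntegralDetermination

theorem MeasureTheory.integral_fin_append_mul {α : Type*} [MeasurableSpace α] (μ : Measure α)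
    [SigmaFinite μ] {k l : ℕ} (f : (Fin k → α) → ℝ) (g : (Fin l → α) → ℝ) :
    ∫ x : Fin (k + l) → α, f (fun i => x (Fin.castAdd l i)) * g (fun j => x (Fin.natAdd k j))
        ∂(Measure.pi fun _ => μ)
      = (∫ x, f x ∂(Measure.pi fun _ => μ)) * ∫ x, g x ∂(Measure.pi fun _ => μ) := by
  rw [← integral_prod_mul,
    ← (measurePreserving_sumPiEquivProdPi fun _ : Fin k ⊕ Fin l => μ).integral_comp
      (MeasurableEquiv.measurableEmbedding _),
    ← (measurePreserving_piCongrLeft (fun _ : Fin (k + l) => μ) finSumFinEquiv).integral_comp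
      (MeasurableEquiv.measurableEmbedding _)]
  congr with y
  have hl (i : Fin k) :
      (Equiv.piCongrLeft (fun _ => α) finSumFinEquiv) y (Fin.castAdd l i) = y (.inl i) := by
    rw [← finSumFinEquiv_apply_left, Equiv.piCongrLeft_apply_apply]
  have hr (j : Fin l) :
      (Equiv.piCongrLeft (fun _ => α) finSumFinEquiv) y (Fin.natAdd k j) = y (.inr j) := by
    rw [← finSumFinEquiv_apply_right, Equiv.piCongrLeft_apply_apply]
  simp only [MeasurableEquiv.coe_piCongrLeft, hl, hr]
  rfl

theorem HasCompactSupport.fin_append_mul {X : Type*} [TopologicalSpace X] [R1Space X] {k l : ℕ}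
    {F : (Fin k → X) → ℝ} {F' : (Fin l → X) → ℝ} (hF : HasCompactSupport F)
    (hF' : HasCompactSupport F') :
    HasCompactSupport fun v : Fin (k + l) → X =>
      F (fun i => v (Fin.castAdd l i)) * F' (fun j => v (Fin.natAdd k j)) :=
  .intro ((hF.prod hF').image (Fin.continuous_append k l)) fun v hv => by
    by_contra hne
    exact hv ⟨(_, _), ⟨subset_tsupport _ (left_ne_zero_of_mul hne),
      subset_tsupport _ (right_ne_zero_of_mul hne)⟩, Fin.append_castAdd_natAdd⟩

section TestFunctions

open scoped CompactlySupported Pointwise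

variable {d : ℕ} {T : Set (EuclideanSpace ℝ (Fin d))} {K : Type*} [MeasurableSpace K]

theorem IkFun_mul (hT : MeasurableSet T) {k l : ℕ} (F : (Fin k → T) → ℝ) (g : Fin k → K → ℝ)
    (F' : (Fin l → T) → ℝ) (g' : Fin l → K → ℝ) (m : Mlam d T K) :
    IkFun d T K k F g m * IkFun d T K l F' g' m =
      IkFun d T K (k + l)
        (fun v => F (fun i => v (Fin.castAdd l i)) * F' (fun j => v (Fin.natAdd k j)))
        (Fin.append g g') m := by
  have := Mlam.sigmaFinite hT m
  rw [IkFun, IkFun, IkFun, ← integral_fin_append_mul]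
  congr with x
  simp only [Fin.prod_univ_add, Fin.append_left, Fin.append_right]
  ring

theorem integral_mul_eq_IkFun_one (hT : MeasurableSet T) (F : T → ℝ) (g : K → ℝ)
    (m : Mlam d T K) :
    ∫ x, F x.1 * g x.2 ∂m.1 = IkFun d T K 1 (fun w => F (w 0)) (fun _ => g) m := by
  have := Mlam.sigmaFinite hT m
  rw [IkFun, ← (measurePreserving_funUnique m.1 (Fin 1)).integral_comp
    (MeasurableEquiv.funUnique (Fin 1) (T × K)).measurableEmbedding]
  simp only [Fin.prod_univ_one]
  rfl

variable [MetricSpace K]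

theorem mul_mem_span_testFuns (hT : MeasurableSet T) {ψ₁ ψ₂ : Mlam d T K → ℝ}
    (h₁ : ψ₁ ∈ Submodule.span ℝ (testFuns d T K)) (h₂ : ψ₂ ∈ Submodule.span ℝ (testFuns d T K)) :
    ψ₁ * ψ₂ ∈ Submodule.span ℝ (testFuns d T K) := by
  have hmul : ∀ f₁ ∈ testFuns d T K, ∀ f₂ ∈ testFuns d T K,
      f₁ * f₂ ∈ Submodule.span ℝ (testFuns d T K) := by
    intro f₁ hf₁ f₂ hf₂
    rcases hf₁ with ⟨c, rfl⟩ | ⟨k, F, g, hF, hFc, hg, rfl⟩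
    · convert Submodule.smul_mem _ c (Submodule.subset_span hf₂) using 1
      ext; simp
    rcases hf₂ with ⟨c, rfl⟩ | ⟨l, F', g', hF', hF'c, hg', rfl⟩
    · have hIk : IkFun d T K k F g ∈ testFuns d T K := Or.inr ⟨k, F, g, hF, hFc, hg, rfl⟩
      convert Submodule.smul_mem _ c (Submodule.subset_span hIk) using 1
      ext; simp [mul_comm]
    · refine Submodule.subset_span (Or.inr ⟨k + l, _, _, by fun_prop, hFc.fin_append_mul hF'c,
        Fin.addCases (fun i => by simpa using hg i) (fun j => by simpa using hg' j),
        funext (IkFun_mul hT F g F' g')⟩)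
  have := Submodule.mul_mem_mul h₁ h₂
  rw [Submodule.span_mul_span] at this
  exact Submodule.span_le.2 (Set.mul_subset_iff.2 hmul) this

variable (d T K) in
def Mlam.productIntegrals : Set C(SeparationQuotient (Mlam d T K), ℝ) :=
  {q | ∃ F : C(T, ℝ), HasCompactSupport F ∧ ∃ g : C(K, ℝ),
    ∀ m : Mlam d T K, q (.mk m) = ∫ x, F x.1 * g x.2 ∂m.1}

theorem Mlam.comp_mk_mem_span_testFuns (hT : MeasurableSet T)
    {q : C(SeparationQuotient (Mlam d T K), ℝ)}
    (hq : q ∈ Algebra.adjoin ℝ (Mlam.productIntegrals d T K)) :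
    q ∘ SeparationQuotient.mk ∈ Submodule.span ℝ (testFuns d T K) := by
  induction hq using Algebra.adjoin_induction with
  | mem q hq =>
    obtain ⟨F, hF, g, hq⟩ := hq
    have : q ∘ SeparationQuotient.mk = IkFun d T K 1 (fun w => F (w 0)) (fun _ => g) :=
      funext fun m => (hq m).trans (integral_mul_eq_IkFun_one hT F g m)
    rw [this]
    exact Submodule.subset_span (Or.inr ⟨1, _, _, by fun_prop,
      hF.comp_homeomorph (Homeomorph.funUnique (Fin 1) T), fun _ => g.continuous, rfl⟩)
  | algebraMap r => exact Submodule.subset_span (Or.inl ⟨r, rfl⟩)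
  | add p q _ _ hp hq => exact Submodule.add_mem _ hp hq
  | mul p q _ _ hp hq => exact mul_mem_span_testFuns hT hp hq

end TestFunctions

section SeparationQuotient

open scoped CompactlySupported

variable {d : ℕ} {T : Set (EuclideanSpace ℝ (Fin d))} {K : Type*} [MetricSpace K]
  [CompactSpace K] [MeasurableSpace K] [BorelSpace K]

theorem Mlam.separatesPoints_adjoin_productIntegrals (hT : MeasurableSet T) :
    (Algebra.adjoin ℝ (Mlam.productIntegrals d T K)).SeparatesPoints := by
  rintro ⟨m⟩ ⟨m'⟩ hmm'
  have := Mlam.isFiniteMeasureOnCompacts hT m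
  have := Mlam.isFiniteMeasureOnCompacts hT m'
  obtain ⟨f, hf⟩ : ∃ f : C_c(T × K, ℝ), ∫ x, f x ∂m.1 ≠ ∫ x, f x ∂m'.1 := by
    by_contra! h
    exact hmm' (SeparationQuotient.mk_eq_mk.2 (Mlam.isInducing_integrals.inseparable_iff.1
      (inseparable_iff_eq.2 (funext h))))
  obtain ⟨F, hF, g, hFg⟩ : ∃ F : C(T, ℝ), HasCompactSupport F ∧ ∃ g : C(K, ℝ),
      ∫ x, F x.1 * g x.2 ∂m.1 ≠ ∫ x, F x.1 * g x.2 ∂m'.1 := by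
    by_contra! h
    exact hf (integral_eq_of_forall_integral_mul_eq h f.toContinuousMap f.hasCompactSupport)
  have hcont : Continuous fun m : Mlam d T K => ∫ x, F x.1 * g x.2 ∂m.1 :=
    Mlam.continuous_integral (by fun_prop) (hF.comp_fst_mul _)
  let q : C(SeparationQuotient (Mlam d T K), ℝ) :=
    ⟨SeparationQuotient.lift _ fun _ _ h => (h.map hcont).eq,
      SeparationQuotient.continuous_lift hcont⟩
  exact ⟨q, ⟨q, Algebra.subset_adjoin ⟨F, hF, g, fun _ => rfl⟩, rfl⟩, hFg⟩

end SeparationQuotient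

/-- The linear span of the constants together with the functions `I_k(·; F, g)` is
dense (in the uniform norm) in the continuous functions on the compact space `M_λ`. -/
theorem Ik_span_dense (hT : MeasurableSet T)
    (φ : Mlam d T K → ℝ)
    (hφ : @Continuous _ _ (TopologicalSpace.induced Subtype.val (vagueTopology (T × K)))
      inferInstance φ)
    (ε : ℝ) (hε : 0 < ε) :
    ∃ ψ ∈ Submodule.span ℝ (testFuns d T K), ∀ m : Mlam d T K, |φ m - ψ m| < ε := by
  have := Mlam.compactSpace (K := K) hT
  have := SeparationQuotient.surjective_mk.compactSpace (X := Mlam d T K)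
    SeparationQuotient.continuous_mk
  obtain ⟨⟨q, hq⟩, hqφ⟩ := ContinuousMap.exists_mem_subalgebra_near_continuous_of_separatesPoints
    _ (Mlam.separatesPoints_adjoin_productIntegrals hT) _
    (SeparationQuotient.continuous_lift (hf := fun _ _ h => (h.map hφ).eq) hφ) ε hε
  refine ⟨q ∘ SeparationQuotient.mk, Mlam.comp_mk_mem_span_testFuns hT hq, fun m => ?_⟩
  simpa [abs_sub_comm] using hqφ (.mk m)
end

section
/- Given a finite sequence of events with impacts u_1,…,u_n ∈ [0,1) and labels l_1,…,l_n ∈ [0,1] applied in order via the operation b' ⋄ b (w) := (1−u')b(w) + u'·1_{[l',1]}(w), the resulting composite bridge B equals B(w) = (∏_{j=1}^n (1−u_j)) w + Σ_{i=1}^n (∏_{j=i+1}^n (1−u_j)) u_i 1_{[l_i,1]}(w), and for V uniform on [0,1], the probability that B^{-1}(V) = l_i is p_i = (∏_{j>i}(1−u_j)) u_i, while the probability that B^{-1}(V) is a continuity point of B is p_0 = ∏_{j=1}^n (1−u_j); moreover p_0 + Σ_i p_i = 1 (assuming the l_i are distinct). -/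
open MeasureTheory

/-- Applying a new elementary bridge with impact `u` and label `l` to an existing
bridge `b`: `(b_{u,l} ⋄ b)(w) = (1−u)b(w) + u·1_{[l,1]}(w)`. -/
noncomputable def elemStep (u l : ℝ) (b : ℝ → ℝ) : ℝ → ℝ :=
  fun w => (1 - u) * b w + u * (if l ≤ w then 1 else 0)

/-- The composite bridge obtained by applying the events `(u_1,l_1),…,(u_n,l_n)`
in time order via the operation `⋄`. -/
noncomputable def compBridge : (n : ℕ) → (Fin n → ℝ) → (Fin n → ℝ) → ℝ → ℝ
  | 0, _, _ => id
  | n + 1, u, l =>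
      elemStep (u (Fin.last n)) (l (Fin.last n))
        (compBridge n (u ∘ Fin.castSucc) (l ∘ Fin.castSucc))

/-- The closed form
`B(w) = (∏_j (1−u_j)) w + Σ_i (∏_{j>i} (1−u_j)) u_i 1_{[l_i,1]}(w)`. -/
noncomputable def closedBridge (n : ℕ) (u l : Fin n → ℝ) (w : ℝ) : ℝ :=
  (∏ j, (1 - u j)) * w +
    ∑ i, (∏ j ∈ Finset.univ.filter (fun j => i < j), (1 - u j)) * u i *
      (if l i ≤ w then 1 else 0)

/-- The generalized inverse of the composite bridge. -/
noncomputable def closedBridgeInv (n : ℕ) (u l : Fin n → ℝ) (v : ℝ) : ℝ :=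
  sInf {w | w ∈ Set.Icc (0:ℝ) 1 ∧ v ≤ closedBridge n u l w}

/-!
Unfolding the recursion, each new event multiplies everything built so far by `1 - u`,
which gives the closed form; at `w = 1`, which every elementary bridge fixes, it gives
`p_0 + ∑ p_i = 1`. The closed form `B w = a w + ∑ c_i 1[l_i ≤ w]` (with `a > 0`, `c_i ≥ 0`)
is increasing and right-continuous with left limits `B (x-) = a x + ∑ c_i 1[l_i < x]`, so
its generalized inverse equals `l_i` exactly on the interval `[B (l_i-), B l_i]` of length
`c_i`, and `B` is continuous everywhere except at the labels with `c_i > 0`. The continuity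
event is therefore the complement in `[0,1]` of disjoint intervals of total length
`∑ c_i = 1 - a`.
-/

open Filter Topology Set

lemma prod_filter_castSucc_lt {M : Type*} [CommMonoid M] {n : ℕ} (f : Fin (n + 1) → M)
    (i : Fin n) :
    ∏ j ∈ Finset.univ.filter (fun j => i.castSucc < j), f j
      = f (Fin.last n) * ∏ j ∈ Finset.univ.filter (fun j => i < j), f j.castSucc := by
  simp [Finset.prod_filter, Fin.prod_univ_castSucc, Fin.castSucc_lt_last, mul_comm]

lemma closedBridge_succ (n : ℕ) (u l : Fin (n + 1) → ℝ) :
    closedBridge (n + 1) u l = elemStep (u (Fin.last n)) (l (Fin.last n))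
      (closedBridge n (u ∘ Fin.castSucc) (l ∘ Fin.castSucc)) := by
  funext w
  simp only [closedBridge, elemStep, Function.comp_apply, Fin.prod_univ_castSucc,
    Fin.sum_univ_castSucc, prod_filter_castSucc_lt]
  have hlast : Finset.univ.filter (fun j => Fin.last n < j) = ∅ :=
    Finset.filter_false_of_mem fun j _ => not_lt.2 (Fin.le_last j)
  rw [hlast, Finset.prod_empty]
  simp only [mul_add, mul_assoc, Finset.mul_sum]
  ring

theorem compBridge_eq_closedBridge (n : ℕ) (u l : Fin n → ℝ) :
    compBridge n u l = closedBridge n u l := by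
  induction n with
  | zero => funext w; simp [compBridge, closedBridge]
  | succ n ih => rw [compBridge, ih, closedBridge_succ]

lemma compBridge_apply_one (n : ℕ) (u l : Fin n → ℝ) (hl : ∀ i, l i ≤ 1) :
    compBridge n u l 1 = 1 := by
  induction n with
  | zero => rfl
  | succ n ih =>
    simp only [compBridge, elemStep, ih (u ∘ Fin.castSucc) (l ∘ Fin.castSucc) fun i => hl _,
      if_pos (hl _)]
    ring

theorem prod_add_sum_jumps_eq_one (n : ℕ) (u : Fin n → ℝ) :
    (∏ j, (1 - u j)) +
        ∑ i, (∏ j ∈ Finset.univ.filter (fun j => i < j), (1 - u j)) * u i = 1 := by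
  have h := compBridge_apply_one n u 0 fun _ => zero_le_one
  simpa [compBridge_eq_closedBridge, closedBridge] using h


theorem sInf_superlevelSet_eq_iff {F : ℝ → ℝ} (hF : Monotone F) {a b v x : ℝ}
    (hx : x ∈ Icc a b) (hFx : ContinuousWithinAt F (Ici x) x) (hb : v ≤ F b)
    (ha : ∀ w < a, F w < v) :
    sInf {w | w ∈ Icc a b ∧ v ≤ F w} = x ↔ v ≤ F x ∧ ∀ w < x, F w < v := by
  set S := {w | w ∈ Icc a b ∧ v ≤ F w}
  have hbdd : BddBelow S := ⟨a, fun w hw => hw.1.1⟩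
  have hne : S.Nonempty := ⟨b, ⟨hx.1.trans hx.2, le_rfl⟩, hb⟩
  constructor
  · intro h
    have hbelow : ∀ w < x, F w < v := by
      intro w hw
      by_contra! hvw
      rcases lt_or_ge w a with hwa | haw
      · exact (ha w hwa).not_ge hvw
      · exact (csInf_le hbdd ⟨⟨haw, hw.le.trans hx.2⟩, hvw⟩).not_gt (h ▸ hw)
    have hright : ∀ y ∈ Ioi x, v ≤ F y := by
      intro y hy
      obtain ⟨s, hs, hsy⟩ := exists_lt_of_csInf_lt hne (h.symm ▸ hy : sInf S < y)
      exact hs.2.trans (hF hsy.le)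
    exact ⟨ge_of_tendsto (hFx.mono Ioi_subset_Ici_self) (eventually_nhdsWithin_of_forall hright),
      hbelow⟩
  · rintro ⟨hvx, hbelow⟩
    exact IsLeast.csInf_eq
      ⟨⟨hx, hvx⟩, fun w hw => not_lt.1 fun hwx => (hbelow w hwx).not_ge hw.2⟩

section JumpFunction

variable {ι : Type*} [Fintype ι]

-- `closedBridge n u l` is `jumpFun (∏ j, (1 - u j)) c l` with `c i = (∏_{j>i} (1 - u j)) * u i`
-- by definition, and `closedBridgeInv n u l` is the corresponding `jumpFunInv`.
noncomputable def jumpFun (a : ℝ) (c l : ι → ℝ) (w : ℝ) : ℝ :=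
  a * w + ∑ i, c i * if l i ≤ w then 1 else 0

noncomputable def leftJumpFun (a : ℝ) (c l : ι → ℝ) (w : ℝ) : ℝ :=
  a * w + ∑ i, c i * if l i < w then 1 else 0

noncomputable def jumpFunInv (a : ℝ) (c l : ι → ℝ) (v : ℝ) : ℝ :=
  sInf {w | w ∈ Icc (0:ℝ) 1 ∧ v ≤ jumpFun a c l w}

variable {a : ℝ} {c l : ι → ℝ}

lemma sum_mul_ite_le_sum_mul_ite (hc : 0 ≤ c) {p q : ι → Prop} [DecidablePred p]
    [DecidablePred q] (h : ∀ i, p i → q i) :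
    ∑ i, c i * (if p i then 1 else 0) ≤ ∑ i, c i * if q i then 1 else 0 :=
  Finset.sum_le_sum fun i _ =>
    mul_le_mul_of_nonneg_left (by split_ifs <;> simp_all) (hc i)

lemma jumpFun_mono (ha : 0 ≤ a) (hc : 0 ≤ c) : Monotone (jumpFun a c l) := fun _ _ h =>
  add_le_add (mul_le_mul_of_nonneg_left h ha)
    (sum_mul_ite_le_sum_mul_ite hc fun _ hi => hi.trans h)

lemma jumpFun_lt_leftJumpFun (ha : 0 < a) (hc : 0 ≤ c) {w x : ℝ} (h : w < x) :
    jumpFun a c l w < leftJumpFun a c l x :=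
  add_lt_add_of_lt_of_le (mul_lt_mul_of_pos_left h ha)
    (sum_mul_ite_le_sum_mul_ite hc fun _ hi => hi.trans_lt h)

lemma leftJumpFun_nonneg (ha : 0 ≤ a) (hc : 0 ≤ c) {x : ℝ} (hx : 0 ≤ x) :
    0 ≤ leftJumpFun a c l x :=
  add_nonneg (mul_nonneg ha hx)
    (Finset.sum_nonneg fun i _ => mul_nonneg (hc i) (by split_ifs <;> norm_num))

lemma leftJumpFun_zero (hl : ∀ i, 0 ≤ l i) : leftJumpFun a c l 0 = 0 := by
  simp [leftJumpFun, fun i => not_lt.2 (hl i)]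

lemma jumpFun_one (hl : ∀ i, l i ≤ 1) : jumpFun a c l 1 = a + ∑ i, c i := by
  simp [jumpFun, hl]

lemma jumpFun_sub_leftJumpFun (x : ℝ) :
    jumpFun a c l x - leftJumpFun a c l x = ∑ i, c i * if l i = x then 1 else 0 := by
  simp only [jumpFun, leftJumpFun, add_sub_add_left_eq_sub, ← Finset.sum_sub_distrib,
    ← mul_sub]
  refine Finset.sum_congr rfl fun i _ => ?_
  rcases lt_trichotomy (l i) x with h | h | h
  · simp [h, h.le, h.ne]
  · simp [h]
  · simp [h.not_gt, h.not_ge, h.ne']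

lemma jumpFun_apply_sub_leftJumpFun (hl : Function.Injective l) (i : ι) :
    jumpFun a c l (l i) - leftJumpFun a c l (l i) = c i := by
  classical
  simp [jumpFun_sub_leftJumpFun, hl.eq_iff]

lemma tendsto_jumpFun_nhdsLT (x : ℝ) :
    Tendsto (jumpFun a c l) (𝓝[<] x) (𝓝 (leftJumpFun a c l x)) := by
  refine ((continuous_const_mul a).tendsto x).mono_left nhdsWithin_le_nhds |>.add
    (tendsto_finsetSum _ fun i _ => tendsto_const_nhds.mul (tendsto_const_nhds.congr' ?_))
  by_cases h : l i < x
  · filter_upwards [mem_nhdsWithin_of_mem_nhds (Ioi_mem_nhds h)] with w hw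
    simp [h, (mem_Ioi.1 hw).le]
  · filter_upwards [self_mem_nhdsWithin] with w hw
    simp [h, (mem_Iio.1 hw).trans_le (not_lt.1 h)]

lemma continuousWithinAt_Ici_jumpFun (x : ℝ) :
    ContinuousWithinAt (jumpFun a c l) (Ici x) x := by
  refine ((continuous_const_mul a).tendsto x).mono_left nhdsWithin_le_nhds |>.add
    (tendsto_finsetSum _ fun i _ => tendsto_const_nhds.mul (tendsto_const_nhds.congr' ?_))
  by_cases h : l i ≤ x
  · filter_upwards [self_mem_nhdsWithin] with w hw
    simp [h, h.trans (mem_Ici.1 hw)]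
  · filter_upwards [mem_nhdsWithin_of_mem_nhds (Iio_mem_nhds (not_le.1 h))] with w hw
    simp [h, mem_Iio.1 hw]

lemma continuousAt_jumpFun_iff (hc : 0 ≤ c) (x : ℝ) :
    ContinuousAt (jumpFun a c l) x ↔ ∀ i, l i = x → c i = 0 := by
  have hleft : ContinuousWithinAt (jumpFun a c l) (Iio x) x ↔
      leftJumpFun a c l x = jumpFun a c l x :=
    ⟨tendsto_nhds_unique (tendsto_jumpFun_nhdsLT x), fun h => by
      rw [ContinuousWithinAt, ← h]; exact tendsto_jumpFun_nhdsLT x⟩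
  rw [continuousAt_iff_continuous_left_right, ← continuousWithinAt_Iio_iff_Iic,
    and_iff_left (continuousWithinAt_Ici_jumpFun x), hleft, eq_comm, ← sub_eq_zero,
    jumpFun_sub_leftJumpFun, Finset.sum_eq_zero_iff_of_nonneg fun i _ =>
      mul_nonneg (hc i) (by split_ifs <;> norm_num)]
  simp

lemma leftJumpFun_le_iff (ha : 0 < a) (hc : 0 ≤ c) {x v : ℝ} :
    leftJumpFun a c l x ≤ v ↔ ∀ w < x, jumpFun a c l w < v :=
  ⟨fun h _ hw => (jumpFun_lt_leftJumpFun ha hc hw).trans_le h, fun h =>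
    le_of_tendsto (tendsto_jumpFun_nhdsLT x)
      (eventually_nhdsWithin_of_forall fun w hw => (h w hw).le)⟩

lemma jumpFunInv_eq_iff (ha : 0 < a) (hc : 0 ≤ c) (hl : ∀ i, l i ∈ Icc (0:ℝ) 1)
    (hsum : a + ∑ i, c i = 1) {v x : ℝ} (hv : v ∈ Icc (0:ℝ) 1) (hx : x ∈ Icc (0:ℝ) 1) :
    jumpFunInv a c l v = x ↔ v ∈ Icc (leftJumpFun a c l x) (jumpFun a c l x) := by
  have h1 : v ≤ jumpFun a c l 1 := by rw [jumpFun_one fun i => (hl i).2, hsum]; exact hv.2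
  have h0 : ∀ w < 0, jumpFun a c l w < v := fun w hw =>
    (jumpFun_lt_leftJumpFun ha hc hw).trans_le
      ((leftJumpFun_zero (a := a) (c := c) fun i => (hl i).1).trans_le hv.1)
  rw [jumpFunInv, sInf_superlevelSet_eq_iff (jumpFun_mono ha.le hc) hx
    (continuousWithinAt_Ici_jumpFun x) h1 h0, ← leftJumpFun_le_iff ha hc, mem_Icc, and_comm]

lemma jumpFunInv_preimage_inter_Icc (ha : 0 < a) (hc : 0 ≤ c) (hl : ∀ i, l i ∈ Icc (0:ℝ) 1)
    (hsum : a + ∑ i, c i = 1) (i : ι) :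
    {v | jumpFunInv a c l v = l i} ∩ Icc 0 1
      = Icc (leftJumpFun a c l (l i)) (jumpFun a c l (l i)) := by
  ext v
  simp only [mem_inter_iff, mem_ofPred_eq]
  constructor
  · rintro ⟨h, hv⟩
    exact (jumpFunInv_eq_iff ha hc hl hsum hv (hl i)).1 h
  · intro h
    have hv : v ∈ Icc (0:ℝ) 1 := by
      refine ⟨(leftJumpFun_nonneg ha.le hc (hl i).1).trans h.1, h.2.trans ?_⟩
      rw [← hsum, ← jumpFun_one fun i => (hl i).2]
      exact jumpFun_mono ha.le hc (hl i).2
    exact ⟨(jumpFunInv_eq_iff ha hc hl hsum hv (hl i)).2 h, hv⟩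

theorem volume_jumpFunInv_preimage_inter_Icc (ha : 0 < a) (hc : 0 ≤ c)
    (hl : ∀ i, l i ∈ Icc (0:ℝ) 1) (hsum : a + ∑ i, c i = 1) (hinj : Function.Injective l)
    (i : ι) :
    volume ({v | jumpFunInv a c l v = l i} ∩ Icc 0 1) = ENNReal.ofReal (c i) := by
  rw [jumpFunInv_preimage_inter_Icc ha hc hl hsum, Real.volume_Icc,
    jumpFun_apply_sub_leftJumpFun hinj]

theorem volume_continuousAt_jumpFunInv_inter_Icc (ha : 0 < a) (hc : 0 ≤ c)
    (hl : ∀ i, l i ∈ Icc (0:ℝ) 1) (hsum : a + ∑ i, c i = 1) (hinj : Function.Injective l) :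
    volume ({v | ContinuousAt (jumpFun a c l) (jumpFunInv a c l v)} ∩ Icc 0 1)
      = ENNReal.ofReal a := by
  set J : ι → Set ℝ := fun i => {v | jumpFunInv a c l v = l i} ∩ Icc 0 1
  set D := Finset.univ.filter fun i => c i ≠ 0
  have hset : {v | ContinuousAt (jumpFun a c l) (jumpFunInv a c l v)} ∩ Icc 0 1
      = Icc 0 1 \ ⋃ i ∈ D, J i := by
    ext v
    simp only [J, D, mem_inter_iff, Set.mem_sdiff, mem_iUnion, Finset.mem_filter,
      Finset.mem_univ, true_and, mem_ofPred_eq, continuousAt_jumpFun_iff hc]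
    constructor
    · rintro ⟨h, hv⟩
      exact ⟨hv, fun ⟨i, hci, hi, _⟩ => hci (h i hi.symm)⟩
    · rintro ⟨hv, h⟩
      exact ⟨fun i hi => by_contra fun hci => h ⟨i, hci, hi.symm, hv⟩, hv⟩
  have hJ : ∀ i, MeasurableSet (J i) := fun i => by
    simp only [J, jumpFunInv_preimage_inter_Icc ha hc hl hsum]
    exact measurableSet_Icc
  have hdisj : (D : Set ι).PairwiseDisjoint J := fun i _ j _ hij =>
    disjoint_left.2 fun v hvi hvj => hij (hinj (hvi.1.symm.trans hvj.1))
  have hU : volume (⋃ i ∈ D, J i) = ENNReal.ofReal (∑ i, c i) := by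
    rw [measure_biUnion_finset hdisj fun i _ => hJ i, Finset.sum_congr rfl fun i _ =>
      volume_jumpFunInv_preimage_inter_Icc ha hc hl hsum hinj i,
      ← ENNReal.ofReal_sum_of_nonneg fun i _ => hc i, Finset.sum_filter_ne_zero]
  rw [hset, measure_sdiff (iUnion₂_subset fun i _ => inter_subset_right)
    (D.measurableSet_biUnion fun i _ => hJ i).nullMeasurableSet (hU ▸ ENNReal.ofReal_ne_top),
    hU, Real.volume_Icc, ← ENNReal.ofReal_sub _ (Finset.sum_nonneg fun i _ => hc i)]
  congr 1
  linarith

end JumpFunction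

/-- Composite bridge: the `⋄`-composition of elementary bridges equals its closed form;
for `V` uniform on `[0,1]`, `B^{-1}(V) = l_i` with probability
`p_i = (∏_{j>i}(1−u_j)) u_i`, `B^{-1}(V)` is a continuity point of `B` with probability
`p_0 = ∏_j (1−u_j)`, and `p_0 + Σ_i p_i = 1`. -/
theorem composite_bridge_law (n : ℕ) (u l : Fin n → ℝ)
    (hu : ∀ i, u i ∈ Set.Ico (0:ℝ) 1) (hl : ∀ i, l i ∈ Set.Icc (0:ℝ) 1)
    (hdist : Function.Injective l) :
    compBridge n u l = closedBridge n u l ∧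
    (∀ i, (volume.restrict (Set.Icc (0:ℝ) 1)) {v | closedBridgeInv n u l v = l i}
      = ENNReal.ofReal ((∏ j ∈ Finset.univ.filter (fun j => i < j), (1 - u j)) * u i)) ∧
    (volume.restrict (Set.Icc (0:ℝ) 1))
        {v | ContinuousAt (closedBridge n u l) (closedBridgeInv n u l v)}
      = ENNReal.ofReal (∏ j, (1 - u j)) ∧
    (∏ j, (1 - u j)) +
        ∑ i, (∏ j ∈ Finset.univ.filter (fun j => i < j), (1 - u j)) * u i = 1 := by
  have hA : 0 < ∏ j, (1 - u j) := Finset.prod_pos fun j _ => sub_pos.2 (hu j).2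
  have hc : 0 ≤ fun i => (∏ j ∈ Finset.univ.filter (fun j => i < j), (1 - u j)) * u i :=
    fun i => mul_nonneg (Finset.prod_nonneg fun j _ => sub_nonneg.2 (hu j).2.le) (hu i).1
  have hsum := prod_add_sum_jumps_eq_one n u
  refine ⟨compBridge_eq_closedBridge n u l, fun i => ?_, ?_, hsum⟩
  · rw [Measure.restrict_apply' measurableSet_Icc]
    exact volume_jumpFunInv_preimage_inter_Icc hA hc hl hsum hdist i
  · rw [Measure.restrict_apply' measurableSet_Icc]
    exact volume_continuousAt_jumpFunInv_inter_Icc hA hc hl hsum hdist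
end

section
/- Under the conditions ∫_0^∞ ∫_0^1 u r^d ν_r(du) μ(dr) < ∞ and ∫_0^∞ ν_r({1}) μ(dr) = 0, for every x ∈ T and t > 0 one has, with probability 1 over the Poisson environment, ∏_{i ∈ α(x,t)} (1 − u_i) > 0; equivalently Σ_{i ∈ α(x,t)} log(1/(1−u_i)) < ∞ a.s. -/
open MeasureTheory Classical
open scoped ENNReal

/-- `expNeg x = e^{-x}` for `x ∈ [0,∞]`. -/
noncomputable def expNeg (x : ℝ≥0∞) : ℝ≥0∞ :=
  if x = ⊤ then 0 else ENNReal.ofReal (Real.exp (-x.toReal))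

/-- Poisson point process, characterized by its Laplace functional. -/
def IsPoissonPP {Ω S : Type*} [MeasurableSpace Ω] [MeasurableSpace S]
    (P : Measure Ω) (Φ : Ω → Measure S) (ν : Measure S) : Prop :=
  ∀ f : S → ℝ≥0∞, Measurable f →
    ∫⁻ ω, expNeg (∫⁻ x, f x ∂(Φ ω)) ∂P = expNeg (∫⁻ x, (1 - expNeg (f x)) ∂ν)

/-!
By the Laplace functional of `Φ`, `E[exp(-θ ∫ f dΦ)] = exp(-∫ (1 - e^{-θ f}) dΛ)` for the
intensity `Λ`. The left side is at most `P(∫ f dΦ < ∞)`, and as `θ ↓ 0` the right side tends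
to `1` by dominated convergence as soon as `∫ (1 - e^{-f}) dΛ < ∞`. For
`f = 1{|x - z| ≤ r} log (1 / (1 - u))` one has `1 - e^{-f} ≤ 1{|x - z| ≤ r} u`, whose
`Λ`-integral is at most `t · Vol(B(0,1)) · ∫∫ u r^d ν_r(du) μ(dr) < ∞`.
-/

open Filter Metric Set
open scoped Topology

@[simp] lemma expNeg_zero : expNeg 0 = 1 := by simp [expNeg]

@[simp] lemma expNeg_top : expNeg ⊤ = 0 := by simp [expNeg]

lemma expNeg_ofReal {a : ℝ} (ha : 0 ≤ a) :
    expNeg (ENNReal.ofReal a) = ENNReal.ofReal (Real.exp (-a)) := by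
  simp [expNeg, ha]

lemma expNeg_le_one (x : ℝ≥0∞) : expNeg x ≤ 1 := by
  unfold expNeg
  split_ifs
  · exact zero_le_one
  · exact ENNReal.ofReal_le_one.2 <|
      Real.exp_le_one_iff.2 (neg_nonpos.2 ENNReal.toReal_nonneg)

lemma expNeg_antitone : Antitone expNeg := by
  intro a b hab
  rcases eq_or_ne b ⊤ with rfl | hb
  · simp
  · have ha : a ≠ ⊤ := ne_top_of_le_ne_top hb hab
    simp only [expNeg, if_neg ha, if_neg hb]
    gcongr

lemma measurable_expNeg : Measurable expNeg :=
  Measurable.ite (measurableSet_singleton ⊤) measurable_const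
    (ENNReal.measurable_ofReal.comp (Real.measurable_exp.comp ENNReal.measurable_toReal.neg))

lemma tendsto_expNeg_nhds_zero : Tendsto expNeg (𝓝 0) (𝓝 1) := by
  have hcont : Tendsto (fun x : ℝ≥0∞ => ENNReal.ofReal (Real.exp (-x.toReal))) (𝓝 0) (𝓝 1) := by
    simpa [Function.comp_def] using (ENNReal.continuous_ofReal.tendsto _).comp
      ((Real.continuous_exp.tendsto _).comp (ENNReal.tendsto_toReal ENNReal.zero_ne_top).neg)
  refine hcont.congr' ?_
  filter_upwards [Iio_mem_nhds ENNReal.zero_lt_top] with x hx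
  rw [expNeg, if_neg hx.ne]

lemma one_sub_expNeg_ofReal_log_le {u : ℝ} (hu0 : 0 ≤ u) (hu1 : u ≤ 1) :
    1 - expNeg (ENNReal.ofReal (Real.log (1 / (1 - u)))) ≤ ENNReal.ofReal u := by
  rcases hu1.eq_or_lt with rfl | hu1
  · simp -- `log (1 / 0) = log 0 = 0`
  have hv : 0 < 1 - u := by linarith
  rw [expNeg_ofReal (Real.log_nonneg (by rw [le_div_iff₀ hv]; linarith)), one_div, Real.log_inv,
    neg_neg, Real.exp_log hv, ← ENNReal.ofReal_one, ← ENNReal.ofReal_sub _ hv.le]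
  simp

lemma ae_mem_of_one_le_lintegral_indicator {Ω : Type*} [MeasurableSpace Ω] {P : Measure Ω}
    [IsProbabilityMeasure P] {s : Set Ω} (h : 1 ≤ ∫⁻ ω, s.indicator 1 ω ∂P) :
    ∀ᵐ ω ∂P, ω ∈ s := by
  obtain ⟨m, -, hm_le, hm_eq⟩ := exists_measurable_le_lintegral_eq P (s.indicator 1)
  have hm_one : m ≤ 1 := fun ω => (hm_le ω).trans (Set.indicator_le_self' (by simp) ω)
  have hm_fin : ∫⁻ ω, m ω ∂P ≠ ⊤ := ((lintegral_mono hm_one).trans_lt (by simp)).ne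
  have hm_ae : m =ᵐ[P] 1 :=
    ae_eq_of_ae_le_of_lintegral_le (ae_of_all _ hm_one) hm_fin aemeasurable_const
      (by simpa [← hm_eq] using h)
  filter_upwards [hm_ae] with ω hω
  by_contra hωs
  simpa [hωs, hω] using hm_le ω

section Poisson

variable {Ω S : Type*} [MeasurableSpace Ω] [MeasurableSpace S]

lemma tendsto_lintegral_one_sub_expNeg_mul {ν : Measure S} {f : S → ℝ≥0∞} (hf : Measurable f)
    (hf_top : ∀ᵐ p ∂ν, f p ≠ ⊤) (hfin : ∫⁻ p, (1 - expNeg (f p)) ∂ν ≠ ⊤) {θ : ℕ → ℝ≥0∞}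
    (hθ_le : ∀ n, θ n ≤ 1) (hθ : Tendsto θ atTop (𝓝 0)) :
    Tendsto (fun n => ∫⁻ p, (1 - expNeg (θ n * f p)) ∂ν) atTop (𝓝 0) := by
  have hdom : ∀ n, (fun p => 1 - expNeg (θ n * f p)) ≤ fun p => 1 - expNeg (f p) :=
    fun n _ => tsub_le_tsub_left (expNeg_antitone (mul_le_of_le_one_left bot_le (hθ_le n))) 1
  have hlim : ∀ᵐ p ∂ν, Tendsto (fun n => 1 - expNeg (θ n * f p)) atTop (𝓝 0) := by
    filter_upwards [hf_top] with p hp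
    have h := tendsto_expNeg_nhds_zero.comp <| by
      simpa using ENNReal.Tendsto.mul_const hθ (.inr hp)
    simpa using ENNReal.Tendsto.sub tendsto_const_nhds h (.inl ENNReal.one_ne_top)
  simpa using tendsto_lintegral_of_dominated_convergence _
    (fun n => measurable_const.sub (measurable_expNeg.comp (hf.const_mul _)))
    (fun n => ae_of_all _ (hdom n)) hfin hlim

lemma IsPoissonPP.ae_lintegral_lt_top {P : Measure Ω} [IsProbabilityMeasure P]
    {Φ : Ω → Measure S} {ν : Measure S} (hΦ : IsPoissonPP P Φ ν) {f : S → ℝ≥0∞}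
    (hf : Measurable f) (hf_top : ∀ᵐ p ∂ν, f p ≠ ⊤)
    (hfin : ∫⁻ p, (1 - expNeg (f p)) ∂ν ≠ ⊤) :
    ∀ᵐ ω ∂P, ∫⁻ p, f p ∂(Φ ω) < ⊤ := by
  set θ : ℕ → ℝ≥0∞ := fun n => ((n : ℝ≥0∞) + 1)⁻¹
  have hθ : Tendsto θ atTop (𝓝 0) := by
    simpa [θ, Function.comp_def] using
      ENNReal.tendsto_inv_nat_nhds_zero.comp (tendsto_add_atTop_nat 1)
  have hθ_le : ∀ n, θ n ≤ 1 := fun n => ENNReal.inv_le_one.2 le_add_self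
  have hθ_ne : ∀ n, θ n ≠ 0 := fun n => ENNReal.inv_ne_zero.2 (by simp)
  have hlaplace : ∀ n, expNeg (∫⁻ p, (1 - expNeg (θ n * f p)) ∂ν)
      ≤ ∫⁻ ω, {ω | ∫⁻ p, f p ∂(Φ ω) < ⊤}.indicator 1 ω ∂P := by
    intro n
    rw [← hΦ _ (hf.const_mul _)]
    refine lintegral_mono fun ω => ?_
    rw [lintegral_const_mul _ hf]
    by_cases hω : ∫⁻ p, f p ∂(Φ ω) < ⊤
    · simpa [hω] using expNeg_le_one _
    · simp [not_lt_top_iff.1 hω, ENNReal.mul_top (hθ_ne n)]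
  have hto_one := tendsto_expNeg_nhds_zero.comp
    (tendsto_lintegral_one_sub_expNeg_mul hf hf_top hfin hθ_le hθ)
  exact ae_mem_of_one_le_lintegral_indicator (le_of_tendsto' hto_one hlaplace)

end Poisson

section BindProdMk

variable {α β : Type*} [MeasurableSpace α] [MeasurableSpace β] (μ : Measure α)
  (ν : α → Measure β)

lemma bind_prodMk_apply_le {s : Set (α × β)} (hs : MeasurableSet s) :
    μ.bind (fun a => (ν a).map (Prod.mk a)) s ≤ ∫⁻ a, ν a (Prod.mk a ⁻¹' s) ∂μ :=
  (Measure.bind_apply_le _ hs).trans_eq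
    (lintegral_congr fun _ => Measure.map_apply measurable_prodMk_left hs)

lemma lintegral_bind_prodMk_le (f : α × β → ℝ≥0∞) :
    ∫⁻ w, f w ∂(μ.bind fun a => (ν a).map (Prod.mk a)) ≤ ∫⁻ a, ∫⁻ b, f (a, b) ∂(ν a) ∂μ :=
  (Measure.lintegral_bind_le _ _ _).trans (lintegral_mono fun _ => lintegral_map_le _ _)

lemma map_fst_bind_prodMk_le (hν : ∀ a, ν a univ ≤ 1) :
    (μ.bind fun a => (ν a).map (Prod.mk a)).map Prod.fst ≤ μ := by
  refine Measure.le_iff.2 fun s hs => ?_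
  rw [Measure.map_apply measurable_fst hs]
  refine (bind_prodMk_apply_le μ ν (measurable_fst hs)).trans ?_
  calc ∫⁻ a, ν a (Prod.mk a ⁻¹' (Prod.fst ⁻¹' s)) ∂μ ≤ ∫⁻ a, s.indicator 1 a ∂μ := by
        refine lintegral_mono fun a => ?_
        change ν a ((fun _ => a) ⁻¹' s) ≤ _
        rw [Set.preimage_const]
        split_ifs with ha <;> simp [ha, hν a]
    _ = μ s := lintegral_indicator_one hs

lemma sigmaFinite_bind_prodMk [SigmaFinite μ] (hν : ∀ a, ν a univ ≤ 1) :
    SigmaFinite (μ.bind fun a => (ν a).map (Prod.mk a)) :=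
  SigmaFinite.of_map _ measurable_fst.aemeasurable
    (Measure.sigmaFinite_of_le μ (map_fst_bind_prodMk_le μ ν hν))

lemma ae_bind_prodMk {s : Set (α × β)} (hs : MeasurableSet s)
    (h : ∀ᵐ a ∂μ, ∀ᵐ b ∂(ν a), (a, b) ∈ s) :
    ∀ᵐ w ∂(μ.bind fun a => (ν a).map (Prod.mk a)), w ∈ s := by
  refine measure_mono_null (fun _ hw => hw) (le_antisymm ?_ bot_le)
  refine (bind_prodMk_apply_le μ ν hs.compl).trans (le_of_eq ?_)
  rw [lintegral_congr_ae (g := fun _ => 0) ?_, lintegral_zero]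
  filter_upwards [h] with a ha using ae_iff.1 ha

end BindProdMk

section Ball

variable {E : Type*} [NormedAddCommGroup E] [NormedSpace ℝ E] [MeasurableSpace E]
  [BorelSpace E] [FiniteDimensional ℝ E] (μ : Measure E) [μ.IsAddHaarMeasure]

lemma addHaar_closedBall_le (x : E) (r : ℝ) :
    μ (closedBall x r) ≤ ENNReal.ofReal (r ^ Module.finrank ℝ E) * μ (closedBall 0 1) := by
  rcases le_or_gt 0 r with hr | hr
  · exact (μ.addHaar_closedBall' x hr).le
  · simp [closedBall_eq_empty.2 hr]

lemma lintegral_restrict_prod_ite_dist_le {γ : Type*} [MeasurableSpace γ] (T : Set E)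
    (ρ : Measure γ) [SFinite ρ] (x : E) {R : γ → ℝ} (hR : Measurable R) {h : γ → ℝ≥0∞}
    (hh : Measurable h) :
    ∫⁻ q : E × γ, (if dist x q.1 ≤ R q.2 then h q.2 else 0) ∂((μ.restrict T).prod ρ)
      ≤ (∫⁻ c, h c * ENNReal.ofReal (R c ^ Module.finrank ℝ E) ∂ρ) * μ (closedBall 0 1) := by
  have hmeas : Measurable fun q : E × γ => if dist x q.1 ≤ R q.2 then h q.2 else 0 :=
    Measurable.ite (measurableSet_le (by fun_prop) (hR.comp measurable_snd))
      (hh.comp measurable_snd) measurable_const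
  rw [lintegral_prod_symm _ hmeas.aemeasurable,
    ← lintegral_mul_const' _ _ (measure_closedBall_lt_top (μ := μ)).ne]
  refine lintegral_mono fun c => ?_
  have hball : {y | dist x y ≤ R c} = closedBall x (R c) := by
    ext y; simp [dist_comm]
  calc ∫⁻ y, (if dist x y ≤ R c then h c else 0) ∂(μ.restrict T)
      = h c * (μ.restrict T) (closedBall x (R c)) := by
        rw [← lintegral_indicator_const measurableSet_closedBall, ← hball]
        rfl
    _ ≤ h c * (ENNReal.ofReal (R c ^ Module.finrank ℝ E) * μ (closedBall 0 1)) := by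
        gcongr
        exact (Measure.restrict_apply_le T _).trans (addHaar_closedBall_le μ x (R c))
    _ = _ := (mul_assoc _ _ _).symm

end Ball

theorem no_accumulation_of_impacts_general (d : ℕ) (Tset : Set (EuclideanSpace ℝ (Fin d)))
    (t : ℝ) (x : EuclideanSpace ℝ (Fin d))
    (μ : Measure ℝ) [SigmaFinite μ] (ν : ℝ → Measure ℝ)
    (hν : ∀ r, IsProbabilityMeasure (ν r))
    (hνsupp : ∀ r, ν r (Set.Icc (0:ℝ) 1) = 1)
    (hint : ∫⁻ r, ∫⁻ u, ENNReal.ofReal u * ENNReal.ofReal (r ^ d) ∂(ν r) ∂μ < ⊤)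
    (Ω : Type*) [MeasurableSpace Ω] (P : Measure Ω) [IsProbabilityMeasure P]
    (Φ : Ω → Measure (ℝ × (EuclideanSpace ℝ (Fin d)) × ℝ × ℝ))
    (hΦ : IsPoissonPP P Φ
      ((volume.restrict (Set.Icc 0 t)).prod ((volume.restrict Tset).prod
        (μ.bind (fun r => (ν r).map (fun u => (r, u))))))) :
    ∀ᵐ ω ∂P, ∫⁻ p, (if dist x p.2.1 ≤ p.2.2.1 then
        ENNReal.ofReal (Real.log (1 / (1 - p.2.2.2))) else 0) ∂(Φ ω) < ⊤ := by
  set ρ := μ.bind fun r => (ν r).map (Prod.mk r)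
  have : SigmaFinite ρ := sigmaFinite_bind_prodMk μ ν fun r => (hν r).measure_univ.le
  set g : EuclideanSpace ℝ (Fin d) × ℝ × ℝ → ℝ≥0∞ :=
    fun q => if dist x q.1 ≤ q.2.1 then ENNReal.ofReal q.2.2 else 0
  have hg : ∫⁻ q, g q ∂((volume.restrict Tset).prod ρ) < ⊤ := by
    refine (lintegral_restrict_prod_ite_dist_le volume Tset ρ x measurable_fst
      (ENNReal.measurable_ofReal.comp measurable_snd)).trans_lt ?_
    rw [finrank_euclideanSpace_fin]
    exact ENNReal.mul_lt_top ((lintegral_bind_prodMk_le μ ν _).trans_lt hint)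
      measure_closedBall_lt_top
  have hu : ∀ᵐ p ∂((volume.restrict (Icc 0 t)).prod ((volume.restrict Tset).prod ρ)),
      p.2.2.2 ∈ Icc (0 : ℝ) 1 :=
    (Measure.quasiMeasurePreserving_snd.comp Measure.quasiMeasurePreserving_snd).ae <|
      ae_bind_prodMk μ ν (measurable_snd measurableSet_Icc) <| ae_of_all _ fun r => by
        have := hν r
        exact (ae_mem_iff_measure_eq measurableSet_Icc.nullMeasurableSet).2
          (by rw [hνsupp r, measure_univ])
  refine hΦ.ae_lintegral_lt_top
    (.ite (measurableSet_le (by fun_prop) (by fun_prop)) (by fun_prop) measurable_const)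
    (ae_of_all _ fun p => by split_ifs <;> simp)
    (ne_top_of_le_ne_top ?_ (lintegral_mono_ae (g := fun p => g p.2) ?_))
  · exact ((lintegral_prod_le _).trans_lt <|
      (setLIntegral_const _ _).trans_lt (ENNReal.mul_lt_top hg measure_Icc_lt_top)).ne
  · filter_upwards [hu] with p hp
    dsimp only [g]
    split_ifs
    · exact one_sub_expNeg_ofReal_log_le hp.1 hp.2
    · simp

/-- Under the integrability condition and provided no event has impact `1`,
for every `x` and `t > 0`, almost surely over the Poisson environment
`∏_{i ∈ α(x,t)} (1 − u_i) > 0`; equivalently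
`Σ_{i ∈ α(x,t)} log(1/(1−u_i)) < ∞` a.s. -/
theorem no_accumulation_of_impacts (d : ℕ) (Tset : Set (EuclideanSpace ℝ (Fin d)))
    (hTset : MeasurableSet Tset)
    (t : ℝ) (ht : 0 < t) (x : EuclideanSpace ℝ (Fin d)) (hx : x ∈ Tset)
    (μ : Measure ℝ) [SigmaFinite μ] (ν : ℝ → Measure ℝ)
    (hν : ∀ r, IsProbabilityMeasure (ν r))
    (hνsupp : ∀ r, ν r (Set.Icc (0:ℝ) 1) = 1)
    (hν1 : ∀ᵐ r ∂μ, ν r {(1:ℝ)} = 0)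
    (hμsupp : μ (Set.Ioi (0:ℝ))ᶜ = 0)
    (hint : ∫⁻ r, ∫⁻ u, ENNReal.ofReal u * ENNReal.ofReal (r ^ d) ∂(ν r) ∂μ < ⊤)
    (Ω : Type*) [MeasurableSpace Ω] (P : Measure Ω) [IsProbabilityMeasure P]
    (Φ : Ω → Measure (ℝ × (EuclideanSpace ℝ (Fin d)) × ℝ × ℝ))
    (hΦ : IsPoissonPP P Φ
      ((volume.restrict (Set.Icc 0 t)).prod ((volume.restrict Tset).prod
        (μ.bind (fun r => (ν r).map (fun u => (r, u))))))) :
    ∀ᵐ ω ∂P, ∫⁻ p, (if dist x p.2.1 ≤ p.2.2.1 then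
        ENNReal.ofReal (Real.log (1 / (1 - p.2.2.2))) else 0) ∂(Φ ω) < ⊤ :=
  no_accumulation_of_impacts_general d Tset t x μ ν hν hνsupp hint Ω P Φ hΦ
end

section
/- For a pure-jump Markov process ζ on a domain T ⊂ R^d whose jump mechanism is: at rate given by a Poisson process of events (z,r,u) with intensity dz μ(dr) ν_r(du), a particle at x in B(z,r) jumps with probability u to a uniform point of B(z,r)∩T — the integral over starting points x ∈ T of the probability that ζ started at x enters a fixed compact set S after its first jump is finite, bounded by Vol(B(0,3a)) + C ∫_a^∞ r^d ∫_0^1 u ν_r(du) μ(dr) when S ⊂ B(0,a), assuming ∫_0^∞ ∫_0^1 u r^d ν_r(du) μ(dr) < ∞. -/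
open MeasureTheory Metric Set Module
open scoped ENNReal

/-!
Split the starting points at radius `3a`. Near the origin the first-jump probability is at most
one, because the rate of jumps into `S ⊆ T` is dominated by the total jump rate `J`. Far from the
origin only events of radius `r ≥ a` can carry `x` into `S`, since their centre is within `r` of
both `x` and `S ⊆ B(0,a)`. For such `r`, integrating over the starting point first (Tonelli)
cancels the normalisation `Vol(B(z,r) ∩ T)` of the uniform landing point, leaving
`∫ Vol(S ∩ B(z,r)) dz = Vol(S) Vol(B(0,r)) ≤ Vol(B(0,a)) Vol(B(0,1)) r^d`.
-/

theorem MeasureTheory.Measure.sFinite_bind {α β : Type*} [MeasurableSpace α] [MeasurableSpace β]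
    {m : Measure α} [SFinite m] {f : α → Measure β} (hf : ∀ a, IsProbabilityMeasure (f a)) :
    SFinite (m.bind f) := by
  by_cases hmeas : AEMeasurable f m
  · rw [← sum_sfiniteSeq m, Measure.bind_sum _ _ (by rwa [sum_sfiniteSeq])]
    have (n : ℕ) : IsFiniteMeasure ((sfiniteSeq m n).bind f) :=
      ⟨(Measure.bind_apply_le f MeasurableSet.univ).trans_lt (by simp [measure_lt_top])⟩
    infer_instance
  · rw [Measure.bind, Measure.map_of_not_aemeasurable hmeas, Measure.join_zero]
    infer_instance

section MetricMeasureSpace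

variable {X : Type*} [PseudoMetricSpace X] [MeasureSpace X]

/- An event of centre `z` and radius `r` sends its particles to a uniform point of `B(z,r) ∩ T`;
`Λ` is the intensity `μ(dr) ν_r(du)` of the radius and the impact of events. -/
noncomputable def landingProb (T S : Set X) (z : X) (r : ℝ) : ℝ≥0∞ :=
  volume (S ∩ closedBall z r) / volume (closedBall z r ∩ T)

noncomputable def entranceRate (T S : Set X) (x : X) (r : ℝ) : ℝ≥0∞ :=
  ∫⁻ z in {z ∈ T | dist x z ≤ r}, landingProb T S z r

noncomputable def jumpRateInto (Λ : Measure (ℝ × ℝ)) (T S : Set X) (x : X) : ℝ≥0∞ :=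
  ∫⁻ q, ENNReal.ofReal q.2 * entranceRate T S x q.1 ∂Λ

variable {T S : Set X}

theorem landingProb_le_one (hST : S ⊆ T) (z : X) (r : ℝ) : landingProb T S z r ≤ 1 :=
  ENNReal.div_le_of_le_mul <| by
    rw [one_mul]; exact measure_mono fun w hw => ⟨hw.2, hST hw.1⟩

theorem landingProb_mul_measure_le (z : X) (r : ℝ) :
    landingProb T S z r * volume (closedBall z r ∩ T) ≤ volume (S ∩ closedBall z r) := by
  rw [mul_comm]; exact ENNReal.mul_div_le

theorem landingProb_eq_zero_of_lt_dist {c : X} {a r : ℝ} (hSa : S ⊆ closedBall c a) {z : X}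
    (hz : a + r < dist z c) : landingProb T S z r = 0 := by
  suffices S ∩ closedBall z r = ∅ by simp [landingProb, this]
  refine eq_empty_of_forall_notMem fun s ⟨hs, hsz⟩ => hz.not_ge ?_
  calc dist z c ≤ dist z s + dist s c := dist_triangle _ _ _
    _ ≤ r + a := add_le_add (by rwa [dist_comm, ← mem_closedBall]) (hSa hs)
    _ = a + r := add_comm _ _

theorem entranceRate_le (hST : S ⊆ T) (x : X) (r : ℝ) :
    entranceRate T S x r ≤ volume {z ∈ T | dist x z ≤ r} :=
  (lintegral_mono fun z => landingProb_le_one hST z r).trans_eq (setLIntegral_one _)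

theorem jumpRateInto_le (Λ : Measure (ℝ × ℝ)) (hST : S ⊆ T) (x : X) :
    jumpRateInto Λ T S x ≤
      ∫⁻ q, ENNReal.ofReal q.2 * volume {z ∈ T | dist x z ≤ q.1} ∂Λ :=
  lintegral_mono fun q => by gcongr; exact entranceRate_le hST x q.1

theorem entranceRate_eq_setLIntegral_inter_closedBall (x : X) (r : ℝ) :
    entranceRate T S x r = ∫⁻ z in T ∩ closedBall x r, landingProb T S z r := by
  simp only [entranceRate, dist_comm x]
  rfl

variable [OpensMeasurableSpace X]

theorem entranceRate_eq_zero_of_lt_dist (hT : MeasurableSet T) {c : X} {a r : ℝ}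
    (hSa : S ⊆ closedBall c a) {x : X} (hx : a + 2 * r < dist x c) :
    entranceRate T S x r = 0 := by
  rw [entranceRate_eq_setLIntegral_inter_closedBall]
  refine setLIntegral_eq_zero (hT.inter measurableSet_closedBall) fun z ⟨_, hxz⟩ =>
    landingProb_eq_zero_of_lt_dist hSa ?_
  have := dist_triangle x z c
  rw [mem_closedBall, dist_comm] at hxz
  linarith

variable [SecondCountableTopology X] [SFinite (volume : Measure X)]

theorem measurable_measure_inter_closedBall (hS : MeasurableSet S) :
    Measurable fun p : X × ℝ => volume (S ∩ closedBall p.1 p.2) :=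
  measurable_measure_prodMk_left <| (measurable_snd hS).inter <|
    measurableSet_le (measurable_snd.dist measurable_fst.fst) measurable_fst.snd

theorem measurable_landingProb (hT : MeasurableSet T) (hS : MeasurableSet S) :
    Measurable fun p : X × ℝ => landingProb T S p.1 p.2 := by
  simp_rw [landingProb, inter_comm (closedBall _ _) T]
  exact (measurable_measure_inter_closedBall hS).div (measurable_measure_inter_closedBall hT)

theorem measurable_entranceRate (hT : MeasurableSet T) (hS : MeasurableSet S) :
    Measurable fun p : X × ℝ => entranceRate T S p.1 p.2 := by
  have hU : MeasurableSet {q : (X × ℝ) × X | q.2 ∈ T ∧ q.2 ∈ closedBall q.1.1 q.1.2} :=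
    (measurable_snd hT).inter <|
      measurableSet_le (measurable_snd.dist measurable_fst.fst) measurable_fst.snd
  convert ((measurable_landingProb hT hS).comp (measurable_snd.prodMk measurable_fst.snd)
    |>.indicator hU).lintegral_prod_right' (ν := volume) using 1
  funext p
  rw [entranceRate_eq_setLIntegral_inter_closedBall,
    ← lintegral_indicator (hT.inter measurableSet_closedBall)]
  rfl

theorem setLIntegral_entranceRate_le (hT : MeasurableSet T) (hS : MeasurableSet S) (r : ℝ) :
    ∫⁻ x in T, entranceRate T S x r ≤ ∫⁻ z, volume (S ∩ closedBall z r) := by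
  set ρ := fun z => landingProb T S z r
  have hρ : Measurable ρ :=
    (measurable_landingProb hT hS).comp (measurable_id.prodMk measurable_const)
  have hU : MeasurableSet {p : X × X | p.2 ∈ closedBall p.1 r} :=
    measurableSet_le (measurable_snd.dist measurable_fst) measurable_const
  have hsymm (x z : X) :
      (closedBall x r).indicator ρ z = (closedBall z r).indicator (fun _ => ρ z) x := by
    by_cases h : z ∈ closedBall x r
    · rw [indicator_of_mem h, indicator_of_mem (mem_closedBall_comm.1 h)]
    · rw [indicator_of_notMem h, indicator_of_notMem (mt mem_closedBall_comm.2 h)]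
  calc ∫⁻ x in T, entranceRate T S x r
      = ∫⁻ x in T, ∫⁻ z in T, (closedBall x r).indicator ρ z := by
        refine lintegral_congr fun x => ?_
        rw [entranceRate_eq_setLIntegral_inter_closedBall,
          lintegral_indicator measurableSet_closedBall,
          Measure.restrict_restrict measurableSet_closedBall, inter_comm]
    _ = ∫⁻ z in T, ∫⁻ x in T, (closedBall x r).indicator ρ z :=
        lintegral_lintegral_swap ((hρ.comp measurable_snd).indicator hU).aemeasurable
    _ = ∫⁻ z in T, ρ z * volume (closedBall z r ∩ T) := by
        refine lintegral_congr fun z => ?_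
        simp_rw [hsymm _ z]
        rw [lintegral_indicator_const measurableSet_closedBall,
          Measure.restrict_apply measurableSet_closedBall]
    _ ≤ ∫⁻ z in T, volume (S ∩ closedBall z r) :=
        lintegral_mono fun z => landingProb_mul_measure_le z r
    _ ≤ ∫⁻ z, volume (S ∩ closedBall z r) := setLIntegral_le_lintegral _ _

end MetricMeasureSpace

section AddHaar

variable {E : Type*} [NormedAddCommGroup E] [NormedSpace ℝ E] [FiniteDimensional ℝ E]
  [MeasureSpace E] [BorelSpace E] [(volume : Measure E).IsAddHaarMeasure]

theorem lintegral_measure_inter_closedBall {S : Set E} (hS : MeasurableSet S) (r : ℝ) :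
    ∫⁻ z, volume (S ∩ closedBall z r) = volume S * volume (closedBall (0 : E) r) := by
  have hU : MeasurableSet {p : E × E | p.2 ∈ S ∧ p.1 ∈ closedBall p.2 r} :=
    (measurable_snd hS).inter <|
      measurableSet_le (measurable_fst.dist measurable_snd) measurable_const
  calc ∫⁻ z, volume (S ∩ closedBall z r)
      = (volume.prod volume) {p : E × E | p.2 ∈ S ∧ p.1 ∈ closedBall p.2 r} := by
        rw [Measure.prod_apply hU]
        simp_rw [mem_closedBall_comm]
        rfl
    _ = ∫⁻ w, S.indicator (fun _ => volume (closedBall (0 : E) r)) w := by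
        rw [Measure.prod_apply_symm hU]
        refine lintegral_congr fun w => ?_
        by_cases hw : w ∈ S
        · rw [indicator_of_mem hw, ← Measure.addHaar_closedBall_center volume w r]
          congr 1 with z
          simp [hw]
        · simp [hw]
    _ = volume S * volume (closedBall (0 : E) r) := by
        rw [lintegral_indicator_const hS, mul_comm]

theorem setLIntegral_diff_closedBall_entranceRate_le {T S : Set E} (hT : MeasurableSet T)
    (hS : MeasurableSet S) {c : E} {a : ℝ} (ha : 0 < a) (hSa : S ⊆ closedBall c a) (r : ℝ) :
    ∫⁻ x in T \ closedBall c (3 * a), entranceRate T S x r ≤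
      volume (closedBall c a) * volume (closedBall (0 : E) 1) *
        if a ≤ r then ENNReal.ofReal (r ^ finrank ℝ E) else 0 := by
  split_ifs with har
  · calc ∫⁻ x in T \ closedBall c (3 * a), entranceRate T S x r
        ≤ ∫⁻ x in T, entranceRate T S x r := lintegral_mono_set sdiff_subset
      _ ≤ ∫⁻ z, volume (S ∩ closedBall z r) := setLIntegral_entranceRate_le hT hS r
      _ = volume S * volume (closedBall (0 : E) r) := lintegral_measure_inter_closedBall hS r
      _ ≤ volume (closedBall c a) *
            (ENNReal.ofReal (r ^ finrank ℝ E) * volume (closedBall (0 : E) 1)) := by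
          rw [Measure.addHaar_closedBall' _ _ (ha.le.trans har)]
          gcongr
      _ = _ := by ring
  · refine (setLIntegral_eq_zero (hT.diff measurableSet_closedBall) fun x hx =>
      entranceRate_eq_zero_of_lt_dist hT hSa ?_).trans_le zero_le
    have : 3 * a < dist x c := not_le.1 hx.2
    linarith

theorem setLIntegral_diff_closedBall_jumpRateInto_le (Λ : Measure (ℝ × ℝ)) [SFinite Λ]
    {T S : Set E} (hT : MeasurableSet T) (hS : MeasurableSet S) {c : E} {a : ℝ} (ha : 0 < a)
    (hSa : S ⊆ closedBall c a) :
    ∫⁻ x in T \ closedBall c (3 * a), jumpRateInto Λ T S x ≤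
      volume (closedBall c a) * volume (closedBall (0 : E) 1) *
        ∫⁻ q, (if a ≤ q.1 then ENNReal.ofReal (q.1 ^ finrank ℝ E * q.2) else 0) ∂Λ := by
  have hm : Measurable fun p : E × (ℝ × ℝ) =>
      ENNReal.ofReal p.2.2 * entranceRate T S p.1 p.2.1 :=
    (ENNReal.measurable_ofReal.comp measurable_snd.snd).mul
      ((measurable_entranceRate hT hS).comp (measurable_fst.prodMk measurable_snd.fst))
  unfold jumpRateInto
  rw [lintegral_lintegral_swap hm.aemeasurable,
    ← lintegral_const_mul' _ _ (ENNReal.mul_ne_top measure_closedBall_lt_top.ne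
      measure_closedBall_lt_top.ne)]
  refine lintegral_mono fun q => ?_
  rw [lintegral_const_mul' _ _ ENNReal.ofReal_ne_top]
  calc ENNReal.ofReal q.2 * ∫⁻ x in T \ closedBall c (3 * a), entranceRate T S x q.1
      ≤ ENNReal.ofReal q.2 * (volume (closedBall c a) * volume (closedBall (0 : E) 1) *
          if a ≤ q.1 then ENNReal.ofReal (q.1 ^ finrank ℝ E) else 0) := by
        gcongr
        exact setLIntegral_diff_closedBall_entranceRate_le hT hS ha hSa q.1
    _ = _ := by
        split_ifs with h
        · rw [ENNReal.ofReal_mul (pow_nonneg (ha.le.trans h) _)]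
          ring
        · simp

end AddHaar

theorem first_jump_entrance_bound_general (d : ℕ) (Tset : Set (EuclideanSpace ℝ (Fin d)))
    (hTset : MeasurableSet Tset)
    (a : ℝ) (ha : 0 < a)
    (Sset : Set (EuclideanSpace ℝ (Fin d))) (hS : IsCompact Sset)
    (hSa : Sset ⊆ Metric.closedBall (0 : EuclideanSpace ℝ (Fin d)) a ∩ Tset)
    (μ : Measure ℝ) [SigmaFinite μ] (ν : ℝ → Measure ℝ)
    (hν : ∀ r, IsProbabilityMeasure (ν r))
    (J : ℝ≥0∞) (hJpos : 0 < J)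
    (hJ : ∀ x ∈ Tset,
      ∫⁻ q : ℝ × ℝ, ENNReal.ofReal q.2 * volume {z ∈ Tset | dist x z ≤ q.1}
          ∂(μ.bind (fun r => (ν r).map (fun u => (r, u)))) ≤ J) :
    ∃ C : ℝ≥0∞, C ≠ ⊤ ∧
      ∫⁻ x in Tset,
          J⁻¹ * ∫⁻ q : ℝ × ℝ, ENNReal.ofReal q.2 *
              ∫⁻ z in {z ∈ Tset | dist x z ≤ q.1},
                volume (Sset ∩ Metric.closedBall z q.1) /
                  volume (Metric.closedBall z q.1 ∩ Tset) ∂volume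
            ∂(μ.bind (fun r => (ν r).map (fun u => (r, u)))) ∂volume
        ≤ volume (Metric.closedBall (0 : EuclideanSpace ℝ (Fin d)) (3 * a)) +
            C * ∫⁻ q : ℝ × ℝ, (if a ≤ q.1 then ENNReal.ofReal (q.1 ^ d * q.2) else 0)
              ∂(μ.bind (fun r => (ν r).map (fun u => (r, u)))) := by
  set Λ := μ.bind fun r => (ν r).map fun u => (r, u)
  have : SFinite Λ := Measure.sFinite_bind fun r =>
    have := hν r; Measure.isProbabilityMeasure_map measurable_prodMk_left.aemeasurable
  have hJinv : J⁻¹ ≠ ⊤ := ENNReal.inv_ne_top.2 hJpos.ne'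
  have hnear : ∫⁻ x in Tset ∩ closedBall 0 (3 * a), J⁻¹ * jumpRateInto Λ Tset Sset x ≤
      volume (closedBall (0 : EuclideanSpace ℝ (Fin d)) (3 * a)) := by
    refine setLIntegral_le_meas (hTset.inter measurableSet_closedBall) (fun x hx _ => ?_)
      fun x hx hxB => absurd hx.2 hxB
    calc J⁻¹ * jumpRateInto Λ Tset Sset x ≤ J⁻¹ * J := by
          gcongr
          exact (jumpRateInto_le Λ (fun s hs => (hSa hs).2) x).trans (hJ x hx.1)
      _ ≤ 1 := ENNReal.inv_mul_le_one J
  have hfar := setLIntegral_diff_closedBall_jumpRateInto_le Λ hTset hS.measurableSet ha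
    fun s hs => (hSa hs).1
  rw [finrank_euclideanSpace_fin] at hfar
  refine ⟨J⁻¹ * (volume (closedBall (0 : EuclideanSpace ℝ (Fin d)) a) *
    volume (closedBall (0 : EuclideanSpace ℝ (Fin d)) 1)),
    ENNReal.mul_ne_top hJinv (ENNReal.mul_ne_top measure_closedBall_lt_top.ne
      measure_closedBall_lt_top.ne), ?_⟩
  rw [← lintegral_inter_add_sdiff _ Tset (measurableSet_closedBall (x := 0) (ε := 3 * a))]
  refine add_le_add hnear ?_
  rw [lintegral_const_mul' _ _ hJinv, mul_assoc]
  exact mul_le_mul_right hfar _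

/-- First-jump entrance bound: for the SLFV jump process, the probability that the
first jump of a particle started at `x` lands in a compact set `S ⊆ B(0,a)` is
`F x = J⁻¹ ∫∫ u ∫_{z ∈ T : x ∈ B(z,r)} Vol(S ∩ B(z,r))/Vol(B(z,r) ∩ T) dz ν_r(du)μ(dr)`,
and its integral over starting points `x ∈ T` is bounded by
`Vol(B(0,3a)) + C ∫_a^∞ r^d ∫ u ν_r(du) μ(dr)` for some finite constant `C`. -/
theorem first_jump_entrance_bound (d : ℕ) (Tset : Set (EuclideanSpace ℝ (Fin d)))
    (hTset : MeasurableSet Tset)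
    (a : ℝ) (ha : 0 < a)
    (Sset : Set (EuclideanSpace ℝ (Fin d))) (hS : IsCompact Sset)
    (hSa : Sset ⊆ Metric.closedBall (0 : EuclideanSpace ℝ (Fin d)) a ∩ Tset)
    (μ : Measure ℝ) [SigmaFinite μ] (ν : ℝ → Measure ℝ)
    (hν : ∀ r, IsProbabilityMeasure (ν r))
    (hνsupp : ∀ r, ν r (Set.Icc (0:ℝ) 1) = 1)
    (hμsupp : μ (Set.Ioi (0:ℝ))ᶜ = 0)
    (hint : ∫⁻ r, ∫⁻ u, ENNReal.ofReal u * ENNReal.ofReal (r ^ d) ∂(ν r) ∂μ < ⊤)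
    (J : ℝ≥0∞) (hJpos : 0 < J) (hJfin : J ≠ ⊤)
    (hJ : ∀ x ∈ Tset,
      ∫⁻ q : ℝ × ℝ, ENNReal.ofReal q.2 * volume {z ∈ Tset | dist x z ≤ q.1}
          ∂(μ.bind (fun r => (ν r).map (fun u => (r, u)))) ≤ J) :
    ∃ C : ℝ≥0∞, C ≠ ⊤ ∧
      ∫⁻ x in Tset,
          J⁻¹ * ∫⁻ q : ℝ × ℝ, ENNReal.ofReal q.2 *
              ∫⁻ z in {z ∈ Tset | dist x z ≤ q.1},
                volume (Sset ∩ Metric.closedBall z q.1) /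
                  volume (Metric.closedBall z q.1 ∩ Tset) ∂volume
            ∂(μ.bind (fun r => (ν r).map (fun u => (r, u)))) ∂volume
        ≤ volume (Metric.closedBall (0 : EuclideanSpace ℝ (Fin d)) (3 * a)) +
            C * ∫⁻ q : ℝ × ℝ, (if a ≤ q.1 then ENNReal.ofReal (q.1 ^ d * q.2) else 0)
              ∂(μ.bind (fun r => (ν r).map (fun u => (r, u)))) :=
  first_jump_entrance_bound_general d Tset hTset a ha Sset hS hSa μ ν hν J hJpos hJ
end
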